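/- arXiv:2310.11091 — 9 statements merged into one kernel-verified Lean document; each statement's English description precedes it below -/
import Mathlib

section
/- Let $r,q$ be positive integers and $n=qr+1$. The permutation $v_{r,n}=\prod_{i=2}^{r}(s_{(i-1)q}s_{(i-1)q-1}\cdots s_{i+1}s_{i})$ of $S_n$ satisfies $v_{r,n}(1)=1$ and $v_{r,n}(j)=(j-1)q+1$ for all $2\le j\le r$. -/
/-- The descending word `s_hi s_{hi-1} ⋯ s_lo` of simple transpositions
`s_i = (i, i+1)`, multiplied left to right. -/
def descWord (hi lo : ℕ) : Equiv.Perm ℕ :=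
  ((List.range (hi + 1 - lo)).map (fun t => Equiv.swap (hi - t) (hi - t + 1))).prod

/-- `v_{r,n} = ∏_{i=2}^{r} (s_{(i-1)q} s_{(i-1)q-1} ⋯ s_{i+1} s_i)`, factors
multiplied left to right. -/
def vPerm (r q : ℕ) : Equiv.Perm ℕ :=
  ((List.range (r - 1)).map (fun i' => descWord ((i' + 1) * q) (i' + 2))).prod

lemma descWord_of_gt (hi lo : ℕ) (h : hi < lo) : descWord hi lo = 1 := by
  unfold descWord
  have : hi + 1 - lo = 0 := by omega
  simp [this]

lemma descWord_succ (hi lo : ℕ) (h : lo ≤ hi) :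
    descWord hi lo = descWord hi (lo + 1) * Equiv.swap lo (lo + 1) := by
  unfold descWord
  have h1 : hi + 1 - lo = (hi - lo) + 1 := by omega
  have h2 : hi + 1 - (lo + 1) = hi - lo := by omega
  rw [h1, h2, List.range_succ, List.map_append, List.prod_append]
  simp [Nat.sub_sub_self h]

lemma descWord_fix_lt_aux : ∀ n hi lo x : ℕ, hi + 1 - lo ≤ n → x < lo →
    descWord hi lo x = x := by
  intro n
  induction n with
  | zero =>
    intro hi lo x h hx
    rw [descWord_of_gt hi lo (by omega)]; rfl
  | succ n ih =>
    intro hi lo x h hx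
    by_cases hle : lo ≤ hi
    · rw [descWord_succ hi lo hle]
      simp only [Equiv.Perm.mul_apply]
      rw [Equiv.swap_apply_of_ne_of_ne (by omega) (by omega)]
      exact ih hi (lo + 1) x (by omega) (by omega)
    · rw [descWord_of_gt hi lo (by omega)]; rfl

lemma descWord_fix_lt (hi lo x : ℕ) (hx : x < lo) : descWord hi lo x = x :=
  descWord_fix_lt_aux (hi + 1 - lo) hi lo x le_rfl hx

lemma descWord_fix_gt_aux : ∀ n hi lo x : ℕ, hi + 1 - lo ≤ n → hi + 1 < x →
    descWord hi lo x = x := by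
  intro n
  induction n with
  | zero =>
    intro hi lo x h hx
    rw [descWord_of_gt hi lo (by omega)]; rfl
  | succ n ih =>
    intro hi lo x h hx
    by_cases hle : lo ≤ hi
    · rw [descWord_succ hi lo hle]
      simp only [Equiv.Perm.mul_apply]
      rw [Equiv.swap_apply_of_ne_of_ne (by omega) (by omega)]
      exact ih hi (lo + 1) x (by omega) hx
    · rw [descWord_of_gt hi lo (by omega)]; rfl

lemma descWord_fix_gt (hi lo x : ℕ) (hx : hi + 1 < x) : descWord hi lo x = x :=
  descWord_fix_gt_aux (hi + 1 - lo) hi lo x le_rfl hx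

lemma descWord_apply_lo_aux : ∀ n hi lo : ℕ, hi + 1 - lo ≤ n → lo ≤ hi + 1 →
    descWord hi lo lo = hi + 1 := by
  intro n
  induction n with
  | zero =>
    intro hi lo h hlo
    have : lo = hi + 1 := by omega
    rw [descWord_of_gt hi lo (by omega), this]; rfl
  | succ n ih =>
    intro hi lo h hlo
    by_cases hle : lo ≤ hi
    · rw [descWord_succ hi lo hle]
      simp only [Equiv.Perm.mul_apply, Equiv.swap_apply_left]
      exact ih hi (lo + 1) (by omega) (by omega)
    · have : lo = hi + 1 := by omega
      rw [descWord_of_gt hi lo (by omega), this]; rfl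

lemma descWord_apply_lo (hi lo : ℕ) (hlo : lo ≤ hi + 1) : descWord hi lo lo = hi + 1 :=
  descWord_apply_lo_aux (hi + 1 - lo) hi lo le_rfl hlo

lemma vPerm_one (q : ℕ) : vPerm 1 q = 1 := by
  unfold vPerm; simp

lemma vPerm_succ (r q : ℕ) (h : 1 ≤ r) :
    vPerm (r + 1) q = vPerm r q * descWord (r * q) (r + 1) := by
  unfold vPerm
  have h1 : r + 1 - 1 = (r - 1) + 1 := by omega
  rw [h1, List.range_succ, List.map_append, List.prod_append]
  have h2 : r - 1 + 1 = r := by omega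
  have h3 : r - 1 + 2 = r + 1 := by omega
  simp [h2, h3]

lemma vPerm_main (q : ℕ) (hq : 0 < q) : ∀ r : ℕ, 0 < r →
    vPerm r q 1 = 1 ∧ (∀ j : ℕ, 2 ≤ j → j ≤ r → vPerm r q j = (j - 1) * q + 1) ∧
    (∀ x : ℕ, (r - 1) * q + 1 < x → vPerm r q x = x) := by
  intro r
  induction r with
  | zero => intro h; omega
  | succ r ih =>
    intro _
    by_cases hr : r = 0
    · subst hr
      refine ⟨by simp [vPerm_one], fun j h2 h1 => by omega, fun x hx => by simp [vPerm_one]⟩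
    · have hr1 : 1 ≤ r := by omega
      obtain ⟨ih1, ih2, ih3⟩ := ih (by omega)
      rw [vPerm_succ r q hr1]
      have hmul1 : (r - 1) * q < r * q := by
        apply Nat.mul_lt_mul_of_lt_of_le (by omega) le_rfl (by omega)
      have hmul2 : r ≤ r * q := Nat.le_mul_of_pos_right r hq
      refine ⟨?_, ?_, ?_⟩
      · simp only [Equiv.Perm.mul_apply]
        rw [descWord_fix_lt _ _ _ (by omega), ih1]
      · intro j h2 h1
        simp only [Equiv.Perm.mul_apply]
        by_cases hj : j ≤ r
        · rw [descWord_fix_lt _ _ _ (by omega)]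
          exact ih2 j h2 hj
        · have hj' : j = r + 1 := by omega
          subst hj'
          rw [descWord_apply_lo _ _ (by omega)]
          rw [ih3 (r * q + 1) (by omega)]
          have h5 : r + 1 - 1 = r := by omega
          rw [h5]
      · intro x hx
        simp only [Nat.add_sub_cancel] at hx
        simp only [Equiv.Perm.mul_apply]
        have hx' : r * q + 1 < x := by omega
        rw [descWord_fix_gt _ _ _ (by omega)]
        exact ih3 x (by omega)

theorem vPerm_apply (r q : ℕ) (hr : 0 < r) (hq : 0 < q) :
    vPerm r q 1 = 1 ∧ ∀ j : ℕ, 2 ≤ j → j ≤ r → vPerm r q j = (j - 1) * q + 1 := by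
  obtain ⟨h1, h2, _⟩ := vPerm_main q hq r hr
  exact ⟨h1, h2⟩
end

section
/- Let $r,q\ge 1$ and $n=qr+1$. Let $T$ be a filling of an $n\times r$ rectangular array (rows indexed $1,\dots,n$, columns $1,\dots,r$) with entries in $\{1,\dots,n\}$ such that: (a) each row is strictly increasing left to right; (b) each column is weakly increasing top to bottom; (c) each value $t\in\{1,\dots,n\}$ appears exactly $r$ times in $T$; (d) the last row satisfies $T(n,j)\le jq+1$ for all $j$; (e) the first row satisfies $T(1,j)\ge (j-2)q+m_{j-1}+1$ for $2\le j\le r$, where $1\le m_i\le q$ are fixed. Then for each fixed $1\le j\le r-1$, the number of entries in column $j+1$ that are at most $jq+1$ equals exactly $r-j$. -/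
lemma step_mono_aux (f : ℕ → ℕ) (N : ℕ) (h : ∀ i, 1 ≤ i → i < N → f i ≤ f (i + 1)) :
    ∀ i i' : ℕ, 1 ≤ i → i ≤ i' → i' ≤ N → f i ≤ f i' := by
  intro i i'
  induction i' with
  | zero => intro h1 h2 h3; omega
  | succ k ih =>
    intro h1 h2 h3
    rcases Nat.eq_or_lt_of_le h2 with rfl | hlt
    · exact le_rfl
    · exact le_trans (ih h1 (by omega) (by omega)) (h k (by omega) (by omega))

/-- For a balanced standard tableau of shape `n × r` (with `n = qr+1`) supported on
the Richardson variety `X^{v_m}_{w_{r,n}}`, column `j+1` has exactly `r-j` entries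
that are at most `jq+1`. -/
theorem count_small_entries_col_succ
    (r q : ℕ) (hr : 0 < r) (hq : 0 < q) (n : ℕ) (hn : n = q * r + 1)
    (m : ℕ → ℕ) (hm : ∀ i : ℕ, 1 ≤ i → i ≤ r - 1 → 1 ≤ m i ∧ m i ≤ q)
    (T : ℕ → ℕ → ℕ)
    (hentries : ∀ i j : ℕ, 1 ≤ i → i ≤ n → 1 ≤ j → j ≤ r → 1 ≤ T i j ∧ T i j ≤ n)
    (hrows : ∀ i j : ℕ, 1 ≤ i → i ≤ n → 1 ≤ j → j < r → T i j < T i (j + 1))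
    (hcols : ∀ i j : ℕ, 1 ≤ i → i < n → 1 ≤ j → j ≤ r → T i j ≤ T (i + 1) j)
    (hcount : ∀ t : ℕ, 1 ≤ t → t ≤ n →
      (((Finset.Icc 1 n) ×ˢ (Finset.Icc 1 r)).filter
        (fun p => T p.1 p.2 = t)).card = r)
    (hlast : ∀ j : ℕ, 1 ≤ j → j ≤ r → T n j ≤ j * q + 1)
    (hfirst : ∀ j : ℕ, 2 ≤ j → j ≤ r → (j - 2) * q + m (j - 1) + 1 ≤ T 1 j)
    (j : ℕ) (hj1 : 1 ≤ j) (hjr : j ≤ r - 1) :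
    ((Finset.Icc 1 n).filter (fun i => T i (j + 1) ≤ j * q + 1)).card = r - j := by
  set B := j * q + 1 with hB
  set a : ℕ → ℕ := fun c => ((Finset.Icc 1 n).filter (fun i => T i c ≤ B)).card with ha
  -- columns are monotone
  have hcolmono : ∀ c, 1 ≤ c → c ≤ r → ∀ i i', 1 ≤ i → i ≤ i' → i' ≤ n → T i c ≤ T i' c := by
    intro c hc1 hcr i i' hi1 hii hin
    exact step_mono_aux (fun i => T i c) n (fun i h1 h2 => hcols i c h1 h2 hc1 hcr) i i' hi1 hii hin
  have hjr' : j + 1 ≤ r := by omega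
  have hBn : B ≤ n := by
    have : j * q ≤ r * q := Nat.mul_le_mul_right q (by omega)
    have : j * q ≤ q * r := by rw [mul_comm q r]; exact this
    omega
  -- total count via values
  set S := ((Finset.Icc 1 n) ×ˢ (Finset.Icc 1 r)).filter (fun p => T p.1 p.2 ≤ B) with hS
  have hval : S.card = B * r := by
    have h1 : S.card = ∑ t ∈ Finset.Icc 1 B, (S.filter (fun p => T p.1 p.2 = t)).card := by
      apply Finset.card_eq_sum_card_fiberwise
      intro p hp
      simp only [Finset.mem_coe, hS, Finset.mem_filter, Finset.mem_product, Finset.mem_Icc] at hp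
      have := hentries p.1 p.2 hp.1.1.1 hp.1.1.2 hp.1.2.1 hp.1.2.2
      rw [Finset.mem_coe, Finset.mem_Icc]
      exact ⟨this.1, hp.2⟩
    rw [h1]
    have h2 : ∀ t ∈ Finset.Icc 1 B, (S.filter (fun p => T p.1 p.2 = t)).card = r := by
      intro t ht
      rw [Finset.mem_Icc] at ht
      have heq : S.filter (fun p => T p.1 p.2 = t)
          = ((Finset.Icc 1 n) ×ˢ (Finset.Icc 1 r)).filter (fun p => T p.1 p.2 = t) := by
        rw [hS, Finset.filter_filter]
        apply Finset.filter_congr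
        intro p hp
        constructor
        · intro h; exact h.2
        · intro h; exact ⟨h ▸ ht.2, h⟩
      rw [heq]
      exact hcount t ht.1 (le_trans ht.2 hBn)
    rw [Finset.sum_congr rfl h2, Finset.sum_const, Nat.card_Icc]
    simp [Nat.mul_comm]
  -- total count via columns
  have hcol : S.card = ∑ c ∈ Finset.Icc 1 r, a c := by
    rw [hS, Finset.card_filter, Finset.sum_product, Finset.sum_comm]
    refine Finset.sum_congr rfl fun c hc => ?_
    show _ = ((Finset.Icc 1 n).filter (fun i => T i c ≤ B)).card
    rw [Finset.card_filter]
  -- columns up to j are fully small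
  have ha_full : ∀ c, 1 ≤ c → c ≤ j → a c = n := by
    intro c hc1 hcj
    have hcr : c ≤ r := by omega
    have hall : ∀ i ∈ Finset.Icc 1 n, T i c ≤ B := by
      intro i hi
      rw [Finset.mem_Icc] at hi
      have h1 : T i c ≤ T n c := hcolmono c hc1 hcr i n hi.1 hi.2 le_rfl
      have h2 : T n c ≤ c * q + 1 := hlast c hc1 hcr
      have h3 : c * q ≤ j * q := Nat.mul_le_mul_right q hcj
      omega
    show ((Finset.Icc 1 n).filter (fun i => T i c ≤ B)).card = n
    rw [Finset.filter_true_of_mem hall, Nat.card_Icc]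
    omega
  -- columns beyond j+1 have no small entries
  have ha_zero : ∀ c, j + 2 ≤ c → c ≤ r → a c = 0 := by
    intro c hc2 hcr
    show ((Finset.Icc 1 n).filter (fun i => T i c ≤ B)).card = 0
    rw [Finset.card_eq_zero, Finset.filter_eq_empty_iff]
    intro i hi
    rw [Finset.mem_Icc] at hi
    have hc1 : 1 ≤ c := by omega
    have h1 : T 1 c ≤ T i c := hcolmono c hc1 hcr 1 i le_rfl hi.1 hi.2
    have h2 : (c - 2) * q + m (c - 1) + 1 ≤ T 1 c := hfirst c (by omega) hcr
    have h3 : 1 ≤ m (c - 1) := (hm (c - 1) (by omega) (by omega)).1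
    have h4 : j * q ≤ (c - 2) * q := Nat.mul_le_mul_right q (by omega)
    omega
  -- split the column sum
  have hsplit : ∑ c ∈ Finset.Icc 1 r, a c = j * n + a (j + 1) := by
    have h1 : Finset.Icc 1 r = Finset.Icc 1 j ∪ Finset.Icc (j + 1) r := by
      ext x
      rw [Finset.mem_union, Finset.mem_Icc, Finset.mem_Icc, Finset.mem_Icc]
      omega
    have hdisj : Disjoint (Finset.Icc 1 j) (Finset.Icc (j + 1) r) := by
      rw [Finset.disjoint_left]
      intro x hx hx'
      rw [Finset.mem_Icc] at hx hx'
      omega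
    rw [h1, Finset.sum_union hdisj]
    have h2 : ∑ c ∈ Finset.Icc 1 j, a c = j * n := by
      have he : ∑ c ∈ Finset.Icc 1 j, a c = ∑ _c ∈ Finset.Icc 1 j, n :=
        Finset.sum_congr rfl (fun c hc => by
          rw [Finset.mem_Icc] at hc
          exact ha_full c hc.1 hc.2)
      rw [he, Finset.sum_const, Nat.card_Icc, smul_eq_mul, Nat.add_sub_cancel]
    have h3 : Finset.Icc (j + 1) r = insert (j + 1) (Finset.Icc (j + 2) r) := by
      ext x
      rw [Finset.mem_insert, Finset.mem_Icc, Finset.mem_Icc]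
      omega
    have h4 : ∑ c ∈ Finset.Icc (j + 1) r, a c = a (j + 1) := by
      rw [h3, Finset.sum_insert (by rw [Finset.mem_Icc]; omega)]
      have he : ∑ c ∈ Finset.Icc (j + 2) r, a c = ∑ _c ∈ Finset.Icc (j + 2) r, 0 :=
        Finset.sum_congr rfl (fun c hc => by
          rw [Finset.mem_Icc] at hc
          exact ha_zero c hc.1 hc.2)
      rw [he, Finset.sum_const_zero, Nat.add_zero]
    rw [h2, h4]
  -- finish with arithmetic
  have hkey : j * n + a (j + 1) = B * r := by rw [← hsplit, ← hcol, hval]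
  have e1 : j * n = j * q * r + j := by rw [hn]; ring
  have e2 : B * r = j * q * r + r := by rw [hB]; ring
  show a (j + 1) = r - j
  omega
end

section
/- Let $r,q\ge 1$, $n=qr+1$, $k\ge 1$, and let $T$ be a $(kn)\times r$ array with entries in $\{1,\dots,n\}$ such that rows are strictly increasing, columns are weakly increasing, each value $t\in\{1,\dots,n\}$ appears exactly $rk$ times, the last row satisfies $T(kn,j)\le jq+1$ for all $j$, and the first row satisfies $T(1,j)\ge (j-2)q+m_{j-1}+1$ for $2\le j\le r$ (with fixed $1\le m_i\le q$). Then for each $1\le j\le r-1$: (i) $(j-1)q+m_j+1\le T(i,j+1)\le jq+1$ for all $1\le i\le k(r-j)$; and (ii) $T(k(r-j)+1,j+1)\ge jq+2$. -/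
/-- Lemma 3.2 of the paper: for a balanced standard tableau of shape `(kn) × r`
(with `n = qr+1`) supported on the Richardson variety `X^{v_m}_{w_{r,n}}`, the
first `k(r-j)` entries of column `j+1` lie in `[(j-1)q+m_j+1, jq+1]` and the
next entry is at least `jq+2`. -/
theorem column_succ_initial_block
    (r q : ℕ) (hr : 0 < r) (hq : 0 < q) (n : ℕ) (hn : n = q * r + 1)
    (k : ℕ) (hk : 0 < k)
    (m : ℕ → ℕ) (hm : ∀ i : ℕ, 1 ≤ i → i ≤ r - 1 → 1 ≤ m i ∧ m i ≤ q)
    (T : ℕ → ℕ → ℕ)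
    (hentries : ∀ i j : ℕ, 1 ≤ i → i ≤ k * n → 1 ≤ j → j ≤ r → 1 ≤ T i j ∧ T i j ≤ n)
    (hrows : ∀ i j : ℕ, 1 ≤ i → i ≤ k * n → 1 ≤ j → j < r → T i j < T i (j + 1))
    (hcols : ∀ i j : ℕ, 1 ≤ i → i < k * n → 1 ≤ j → j ≤ r → T i j ≤ T (i + 1) j)
    (hcount : ∀ t : ℕ, 1 ≤ t → t ≤ n →
      (((Finset.Icc 1 (k * n)) ×ˢ (Finset.Icc 1 r)).filter
        (fun p => T p.1 p.2 = t)).card = r * k)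
    (hlast : ∀ j : ℕ, 1 ≤ j → j ≤ r → T (k * n) j ≤ j * q + 1)
    (hfirst : ∀ j : ℕ, 2 ≤ j → j ≤ r → (j - 2) * q + m (j - 1) + 1 ≤ T 1 j)
    (j : ℕ) (hj1 : 1 ≤ j) (hjr : j ≤ r - 1) :
    (∀ i : ℕ, 1 ≤ i → i ≤ k * (r - j) →
        (j - 1) * q + m j + 1 ≤ T i (j + 1) ∧ T i (j + 1) ≤ j * q + 1) ∧
      j * q + 2 ≤ T (k * (r - j) + 1) (j + 1) := by
  have hjr' : j + 1 ≤ r := by omega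
  set d := r - j with hd
  have hrd : r = j + d := by omega
  have hqr : r ≤ q * r := Nat.le_mul_of_pos_left r hq
  have hdn : d ≤ n := by omega
  have hkn1 : 1 ≤ k * n := Nat.mul_pos hk (by omega)
  -- columns are weakly increasing (general form)
  have hmono : ∀ c, 1 ≤ c → c ≤ r → ∀ a b, 1 ≤ a → a ≤ b → b ≤ k * n → T a c ≤ T b c := by
    intro c hc1 hc2 a b ha hab hb
    induction b with
    | zero => omega
    | succ b ih =>
      rcases Nat.lt_or_ge a (b + 1) with h | h
      · exact le_trans (ih (by omega) (by omega))
          (hcols b c (by omega) (by omega) hc1 hc2)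
      · have hab' : a = b + 1 := by omega
        simp [hab']
  have hq1 : j * q + 1 ≤ n := by
    have : j * q ≤ r * q := Nat.mul_le_mul_right q (by omega)
    have : r * q = q * r := Nat.mul_comm r q
    omega
  set s := (Finset.Icc 1 (k * n)) ×ˢ (Finset.Icc 1 r) with hs
  set F := s.filter (fun p => T p.1 p.2 ≤ j * q + 1) with hF
  set A := (Finset.Icc 1 (k * n)).filter (fun i => T i (j + 1) ≤ j * q + 1) with hA
  -- counting all entries with value ≤ jq+1
  have hcard1 : F.card = (j * q + 1) * (r * k) := by
    have hbU : F = (Finset.Icc 1 (j * q + 1)).biUnion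
        (fun t => s.filter (fun p => T p.1 p.2 = t)) := by
      ext p
      simp only [hF, hs, Finset.mem_filter, Finset.mem_biUnion, Finset.mem_Icc,
        Finset.mem_product]
      constructor
      · rintro ⟨⟨⟨h1, h2⟩, ⟨h3, h4⟩⟩, hle⟩
        exact ⟨T p.1 p.2, ⟨(hentries p.1 p.2 h1 h2 h3 h4).1, hle⟩, ⟨⟨h1, h2⟩, ⟨h3, h4⟩⟩, rfl⟩
      · rintro ⟨t, ⟨ht1, ht2⟩, hps, rfl⟩
        exact ⟨hps, ht2⟩
    have hcongr : ∀ t ∈ Finset.Icc 1 (j * q + 1),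
        (s.filter (fun p => T p.1 p.2 = t)).card = r * k := by
      intro t ht
      simp only [Finset.mem_Icc] at ht
      exact hcount t ht.1 (le_trans ht.2 hq1)
    rw [hbU, Finset.card_biUnion, Finset.sum_congr rfl hcongr, Finset.sum_const,
      Nat.card_Icc]
    · simp [smul_eq_mul]
    · intro x _ y _ hxy
      rw [Function.onFun, Finset.disjoint_left]
      intro p hp1 hp2
      simp only [Finset.mem_filter] at hp1 hp2
      exact hxy (hp1.2 ▸ hp2.2)
  -- split by columns
  have himage_card : (A.image (fun i => (i, j + 1))).card = A.card :=
    Finset.card_image_of_injective _ (fun a b h => by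
      simpa using congrArg Prod.fst h)
  have hsplit : F = ((Finset.Icc 1 (k * n)) ×ˢ (Finset.Icc 1 j)) ∪
      A.image (fun i => (i, j + 1)) := by
    ext p
    obtain ⟨a, c⟩ := p
    simp only [hF, hs, hA, Finset.mem_filter, Finset.mem_union, Finset.mem_product,
      Finset.mem_Icc, Finset.mem_image]
    constructor
    · rintro ⟨⟨⟨h1, h2⟩, ⟨h3, h4⟩⟩, hle⟩
      rcases Nat.lt_or_ge c (j + 1) with hc | hc
      · exact Or.inl ⟨⟨h1, h2⟩, ⟨h3, by omega⟩⟩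
      rcases Nat.lt_or_ge c (j + 2) with hc2 | hc2
      · have hcj : c = j + 1 := by omega
        subst hcj
        exact Or.inr ⟨a, ⟨⟨⟨h1, h2⟩, hle⟩, rfl⟩⟩
      · exfalso
        have hfc : (c - 2) * q + m (c - 1) + 1 ≤ T 1 c := hfirst c (by omega) h4
        have hmc : 1 ≤ m (c - 1) := (hm (c - 1) (by omega) (by omega)).1
        have hjc : j * q ≤ (c - 2) * q := Nat.mul_le_mul_right q (by omega)
        have h1c : T 1 c ≤ T a c := hmono c h3 h4 1 a le_rfl h1 h2
        omega
    · rintro (⟨⟨h1, h2⟩, ⟨h3, h4⟩⟩ | ⟨i, ⟨⟨⟨h1, h2⟩, hle⟩, heq⟩⟩)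
      · refine ⟨⟨⟨h1, h2⟩, ⟨h3, by omega⟩⟩, ?_⟩
        have hup : T a c ≤ T (k * n) c := hmono c h3 (by omega) a (k * n) h1 h2 le_rfl
        have hl := hlast c h3 (by omega)
        have hcq : c * q ≤ j * q := Nat.mul_le_mul_right q h4
        omega
      · injection heq with e1 e2
        subst e1; subst e2
        exact ⟨⟨⟨h1, h2⟩, ⟨by omega, hjr'⟩⟩, hle⟩
  have hdisj : Disjoint ((Finset.Icc 1 (k * n)) ×ˢ (Finset.Icc 1 j))
      (A.image (fun i => (i, j + 1))) := by
    rw [Finset.disjoint_left]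
    rintro ⟨a, c⟩ hp1 hp2
    simp only [Finset.mem_product, Finset.mem_Icc] at hp1
    simp only [Finset.mem_image] at hp2
    obtain ⟨i, _, heq⟩ := hp2
    injection heq with e1 e2
    omega
  have hcard2 : F.card = (k * n) * j + A.card := by
    rw [hsplit, Finset.card_union_of_disjoint hdisj, Finset.card_product, himage_card,
      Nat.card_Icc, Nat.card_Icc]
    simp
  have hAcard : A.card = k * d := by
    have key : (j * q + 1) * (r * k) = (k * n) * j + k * d := by
      subst hn; rw [hrd]; ring
    have h2 : (k * n) * j + A.card = (k * n) * j + k * d := by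
      rw [← hcard2, hcard1, key]
    exact Nat.add_left_cancel h2
  have hA_eq : A = Finset.Icc 1 (k * d) := by
    have hsub : A ⊆ Finset.Icc 1 (k * d) := by
      intro i hi
      simp only [hA, Finset.mem_filter, Finset.mem_Icc] at hi
      obtain ⟨⟨hi1, hi2⟩, hile⟩ := hi
      have hIcc : Finset.Icc 1 i ⊆ A := by
        intro i' hi'
        simp only [Finset.mem_Icc] at hi'
        simp only [hA, Finset.mem_filter, Finset.mem_Icc]
        exact ⟨⟨hi'.1, by omega⟩,
          le_trans (hmono (j + 1) (by omega) hjr' i' i hi'.1 hi'.2 hi2) hile⟩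
      have hile2 : i ≤ A.card := by
        have := Finset.card_le_card hIcc
        simpa using this
      exact Finset.mem_Icc.mpr ⟨hi1, hAcard ▸ hile2⟩
    exact Finset.eq_of_subset_of_card_le hsub (by rw [Nat.card_Icc, hAcard]; simp)
  have hkd_le : k * d ≤ k * n := Nat.mul_le_mul_left k hdn
  refine ⟨fun i hi1 hi2 => ?_, ?_⟩
  · have hiA : i ∈ A := by rw [hA_eq]; exact Finset.mem_Icc.mpr ⟨hi1, hi2⟩
    simp only [hA, Finset.mem_filter, Finset.mem_Icc] at hiA
    refine ⟨?_, hiA.2⟩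
    have h1T := hfirst (j + 1) (by omega) hjr'
    have e1 : (j + 1) - 2 = j - 1 := by omega
    have e2 : (j + 1) - 1 = j := by omega
    rw [e1, e2] at h1T
    exact le_trans h1T (hmono (j + 1) (by omega) hjr' 1 i le_rfl hi1 hiA.1.2)
  · have hmem : k * d + 1 ≤ k * n := by
      have hdn1 : d + 1 ≤ n := by omega
      calc k * d + 1 ≤ k * d + k := by omega
        _ = k * (d + 1) := by ring
        _ ≤ k * n := Nat.mul_le_mul_left k hdn1
    have hnotA : k * d + 1 ∉ A := by
      rw [hA_eq]
      simp [Finset.mem_Icc]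
    have hgt : ¬ (T (k * d + 1) (j + 1) ≤ j * q + 1) := fun hle =>
      hnotA (Finset.mem_filter.mpr ⟨Finset.mem_Icc.mpr ⟨by omega, hmem⟩, hle⟩)
    omega
end

section
/- Let $r,q\ge 1$, $n=qr+1$, $k\ge 1$, and let $T$ be a $(kn)\times r$ array with entries in $\{1,\dots,n\}$ satisfying: rows strictly increasing, columns weakly increasing, every value appears exactly $rk$ times, $T(kn,j)\le jq+1$ for all $j$, and $T(1,j)\ge (j-2)q+m_{j-1}+1$ for $2\le j\le r$ with fixed $1\le m_i\le q$. Then for every fixed $1\le j\le r-1$ and every integer $t$ with $(j-1)q+2\le t\le jq+1$, every occurrence of the value $t$ in $T$ is in column $j$ or column $j+1$; moreover every value $t$ with $(r-1)q+2\le t\le rq+1$ occurs only in column $r$. -/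
/-- Lemma 3.1 of the paper: in a balanced standard tableau supported on
`X^{v_m}_{w_{r,n}}`, every value `t` with `(j-1)q+2 ≤ t ≤ jq+1` (for `1 ≤ j ≤ r-1`)
occurs only in columns `j` or `j+1`, and every value `t` with
`(r-1)q+2 ≤ t ≤ rq+1` occurs only in column `r`. -/
theorem value_location
    (r q : ℕ) (hr : 0 < r) (hq : 0 < q) (n : ℕ) (hn : n = q * r + 1)
    (k : ℕ) (hk : 0 < k)
    (m : ℕ → ℕ) (hm : ∀ i : ℕ, 1 ≤ i → i ≤ r - 1 → 1 ≤ m i ∧ m i ≤ q)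
    (T : ℕ → ℕ → ℕ)
    (hentries : ∀ i j : ℕ, 1 ≤ i → i ≤ k * n → 1 ≤ j → j ≤ r → 1 ≤ T i j ∧ T i j ≤ n)
    (hrows : ∀ i j : ℕ, 1 ≤ i → i ≤ k * n → 1 ≤ j → j < r → T i j < T i (j + 1))
    (hcols : ∀ i j : ℕ, 1 ≤ i → i < k * n → 1 ≤ j → j ≤ r → T i j ≤ T (i + 1) j)
    (hcount : ∀ t : ℕ, 1 ≤ t → t ≤ n →
      (((Finset.Icc 1 (k * n)) ×ˢ (Finset.Icc 1 r)).filter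
        (fun p => T p.1 p.2 = t)).card = r * k)
    (hlast : ∀ j : ℕ, 1 ≤ j → j ≤ r → T (k * n) j ≤ j * q + 1)
    (hfirst : ∀ j : ℕ, 2 ≤ j → j ≤ r → (j - 2) * q + m (j - 1) + 1 ≤ T 1 j) :
    (∀ j : ℕ, 1 ≤ j → j ≤ r - 1 → ∀ t : ℕ, (j - 1) * q + 2 ≤ t → t ≤ j * q + 1 →
      ∀ i c : ℕ, 1 ≤ i → i ≤ k * n → 1 ≤ c → c ≤ r → T i c = t → c = j ∨ c = j + 1) ∧
    (∀ t : ℕ, (r - 1) * q + 2 ≤ t → t ≤ r * q + 1 →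
      ∀ i c : ℕ, 1 ≤ i → i ≤ k * n → 1 ≤ c → c ≤ r → T i c = t → c = r) := by

  have mono : ∀ jc : ℕ, 1 ≤ jc → jc ≤ r → ∀ a b : ℕ, 1 ≤ a → a ≤ b → b ≤ k * n →
      T a jc ≤ T b jc := by
    intro jc h1 h2 a b ha hab hb
    induction b, hab using Nat.le_induction with
    | base => exact le_refl _
    | succ b hab ih =>
        exact le_trans (ih (by omega)) (hcols b jc (by omega) (by omega) h1 h2)
  constructor
  · intro j hj1 hj2 t ht1 ht2 i c hi1 hi2 hc1 hc2 hT
    have hub : T i c ≤ c * q + 1 :=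
      le_trans (mono c hc1 hc2 i (k * n) hi1 hi2 le_rfl) (hlast c hc1 hc2)
    have hcj : j ≤ c := by
      by_contra h
      push_neg at h
      have : c * q ≤ (j - 1) * q := Nat.mul_le_mul_right q (by omega)
      omega
    have hcu : c ≤ j + 1 := by
      by_contra h
      push_neg at h
      have hf := hfirst c (by omega) hc2
      have hm1 := (hm (c - 1) (by omega) (by omega)).1
      have hlb : T 1 c ≤ T i c := mono c hc1 hc2 1 i le_rfl hi1 hi2
      have : j * q ≤ (c - 2) * q := Nat.mul_le_mul_right q (by omega)
      omega
    omega
  · intro t ht1 ht2 i c hi1 hi2 hc1 hc2 hT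
    have hub : T i c ≤ c * q + 1 :=
      le_trans (mono c hc1 hc2 i (k * n) hi1 hi2 le_rfl) (hlast c hc1 hc2)
    have hcj : r ≤ c := by
      by_contra h
      push_neg at h
      have : c * q ≤ (r - 1) * q := Nat.mul_le_mul_right q (by omega)
      omega
    omega
end

section
/- Let $r,q\ge 1$, $n=qr+1$, $k\ge 1$, and let $T$ be a $(kn)\times r$ array satisfying the hypotheses: rows strictly increasing, columns weakly increasing, every value in $\{1,\dots,n\}$ appears exactly $rk$ times, $T(kn,j)\le jq+1$ for all $j$, and $T(1,j)\ge (j-2)q+m_{j-1}+1$ for $2\le j\le r$ with fixed $1\le m_i\le q$. Then $T(k,r)\le (r-1)q+1$, and for $m>k$, $T(m,r)=(r-1)q+l$ where $l\ge 2$ is the least positive integer such that $k(r(l-1)+1)\ge m$. -/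
/-- Corollary 3.3 of the paper: the last column of a balanced standard tableau
supported on `X^{v_m}_{w_{r,n}}` satisfies `T(k,r) ≤ (r-1)q+1`, and for `m > k`
one has `T(m,r) = (r-1)q + l` where `l ≥ 2` is least with `k(r(l-1)+1) ≥ m`. -/
theorem last_column_values
    (r q : ℕ) (hr : 0 < r) (hq : 0 < q) (n : ℕ) (hn : n = q * r + 1)
    (k : ℕ) (hk : 0 < k)
    (m : ℕ → ℕ) (hm : ∀ i : ℕ, 1 ≤ i → i ≤ r - 1 → 1 ≤ m i ∧ m i ≤ q)
    (T : ℕ → ℕ → ℕ)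
    (hentries : ∀ i j : ℕ, 1 ≤ i → i ≤ k * n → 1 ≤ j → j ≤ r → 1 ≤ T i j ∧ T i j ≤ n)
    (hrows : ∀ i j : ℕ, 1 ≤ i → i ≤ k * n → 1 ≤ j → j < r → T i j < T i (j + 1))
    (hcols : ∀ i j : ℕ, 1 ≤ i → i < k * n → 1 ≤ j → j ≤ r → T i j ≤ T (i + 1) j)
    (hcount : ∀ t : ℕ, 1 ≤ t → t ≤ n →
      (((Finset.Icc 1 (k * n)) ×ˢ (Finset.Icc 1 r)).filter
        (fun p => T p.1 p.2 = t)).card = r * k)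
    (hlast : ∀ j : ℕ, 1 ≤ j → j ≤ r → T (k * n) j ≤ j * q + 1)
    (hfirst : ∀ j : ℕ, 2 ≤ j → j ≤ r → (j - 2) * q + m (j - 1) + 1 ≤ T 1 j) :
    T k r ≤ (r - 1) * q + 1 ∧
      ∀ m' l : ℕ, k < m' → m' ≤ k * n → 2 ≤ l →
        m' ≤ k * (r * (l - 1) + 1) → k * (r * (l - 2) + 1) < m' →
        T m' r = (r - 1) * q + l := by
  obtain ⟨r', rfl⟩ : ∃ r', r = r' + 1 := ⟨r - 1, by omega⟩
  have hn' : n = r' * q + q + 1 := by rw [hn]; ring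
  have hkn1 : 1 ≤ k * n := by
    have : 1 * 1 ≤ k * n := Nat.mul_le_mul hk (by omega)
    omega
  -- monotonicity along columns
  have mono : ∀ j, 1 ≤ j → j ≤ r' + 1 → ∀ i' i, 1 ≤ i → i ≤ i' → i' ≤ k * n →
      T i j ≤ T i' j := by
    intro j hj1 hjr i'
    induction i' with
    | zero => intro i hi1 hle _; omega
    | succ p ih =>
      intro i hi1 hle hub
      rcases Nat.lt_or_ge i (p + 1) with h | h
      · have h1 : T i j ≤ T p j := ih i hi1 (by omega) (by omega)
        have h2 : T p j ≤ T (p + 1) j := hcols p j (by omega) (by omega) hj1 hjr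
        omega
      · have : i = p + 1 := by omega
        rw [this]
  -- every entry in column j is at most j*q+1
  have colbound : ∀ i j, 1 ≤ i → i ≤ k * n → 1 ≤ j → j ≤ r' + 1 → T i j ≤ j * q + 1 :=
    fun i j hi1 hi2 hj1 hj2 =>
      le_trans (mono j hj1 hj2 (k * n) i hi1 hi2 le_rfl) (hlast j hj1 hj2)
  -- each large value occurs exactly r*k times in the last column
  have fiber : ∀ t, r' * q + 1 < t → t ≤ n →
      ((Finset.Icc 1 (k * n)).filter (fun i => T i (r' + 1) = t)).card = (r' + 1) * k := by
    intro t ht1 ht2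
    have hset : ((Finset.Icc 1 (k * n)) ×ˢ (Finset.Icc 1 (r' + 1))).filter
        (fun p => T p.1 p.2 = t)
        = ((Finset.Icc 1 (k * n)).filter (fun i => T i (r' + 1) = t)) ×ˢ {r' + 1} := by
      ext ⟨i, j⟩
      simp only [Finset.mem_filter, Finset.mem_product, Finset.mem_Icc, Finset.mem_singleton]
      constructor
      · rintro ⟨⟨⟨hi1, hi2⟩, hj1, hj2⟩, hT⟩
        have hjr : j = r' + 1 := by
          by_contra hne
          have hjlt : j ≤ r' := by omega
          have hb := colbound i j hi1 hi2 hj1 (by omega)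
          have hmul : j * q ≤ r' * q := Nat.mul_le_mul_right q hjlt
          omega
        subst hjr
        exact ⟨⟨⟨hi1, hi2⟩, hT⟩, rfl⟩
      · rintro ⟨⟨⟨hi1, hi2⟩, hT⟩, hj⟩
        subst hj
        exact ⟨⟨⟨hi1, hi2⟩, ⟨by omega, le_refl _⟩⟩, hT⟩
    have hc := hcount t (by omega) ht2
    rw [hset, Finset.card_product] at hc
    simpa using hc
  -- cardinality of the set of rows whose last entry is ≤ r'*q+1+s'
  have Ncard : ∀ s', s' ≤ q →
      ((Finset.Icc 1 (k * n)).filter (fun i => T i (r' + 1) ≤ r' * q + 1 + s')).card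
        = k * ((r' + 1) * s' + 1) := by
    intro s' hs'
    set v := r' * q + 1 + s' with hv
    have hBcard : ((Finset.Icc 1 (k * n)).filter (fun i => ¬ T i (r' + 1) ≤ v)).card
        = (n - v) * ((r' + 1) * k) := by
      set B := (Finset.Icc 1 (k * n)).filter (fun i => ¬ T i (r' + 1) ≤ v) with hB
      have hmap : ∀ i ∈ B, T i (r' + 1) ∈ Finset.Icc (v + 1) n := by
        intro i hi
        rw [hB, Finset.mem_filter, Finset.mem_Icc] at hi
        rw [Finset.mem_Icc]
        exact ⟨by omega, (hentries i (r' + 1) hi.1.1 hi.1.2 (by omega) le_rfl).2⟩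
      have hsum := Finset.card_eq_sum_card_fiberwise hmap
      rw [hsum]
      have hfib : ∀ b ∈ Finset.Icc (v + 1) n,
          (B.filter (fun i => T i (r' + 1) = b)).card = (r' + 1) * k := by
        intro b hb
        rw [Finset.mem_Icc] at hb
        have hBb : B.filter (fun i => T i (r' + 1) = b)
            = (Finset.Icc 1 (k * n)).filter (fun i => T i (r' + 1) = b) := by
          rw [hB, Finset.filter_filter]
          apply Finset.filter_congr
          intro i _
          constructor
          · rintro ⟨_, h2⟩; exact h2
          · intro h2; exact ⟨by omega, h2⟩
        rw [hBb]
        exact fiber b (by omega) hb.2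
      rw [Finset.sum_congr rfl hfib, Finset.sum_const, Nat.card_Icc, smul_eq_mul]
      congr 1
      omega
    have htot := Finset.card_filter_add_card_filter_not
      (s := Finset.Icc 1 (k * n)) (p := fun i => T i (r' + 1) ≤ v)
    rw [hBcard, Nat.card_Icc] at htot
    have hnv : n - v = q - s' := by omega
    rw [hnv] at htot
    obtain ⟨d, rfl⟩ : ∃ d, q = s' + d := ⟨q - s', by omega⟩
    have hd : (s' + d) - s' = d := by omega
    rw [hd] at htot
    have hkey : k * n = d * ((r' + 1) * k) + k * ((r' + 1) * s' + 1) := by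
      rw [hn]; ring
    omega
  -- the key equivalence
  have main : ∀ s', s' ≤ q → ∀ m', 1 ≤ m' → m' ≤ k * n →
      (T m' (r' + 1) ≤ r' * q + 1 + s' ↔ m' ≤ k * ((r' + 1) * s' + 1)) := by
    intro s' hs' m' hm1 hm2
    have hA := Ncard s' hs'
    set v := r' * q + 1 + s' with hv
    set A := (Finset.Icc 1 (k * n)).filter (fun i => T i (r' + 1) ≤ v) with hAdef
    constructor
    · intro h
      have hsub : Finset.Icc 1 m' ⊆ A := by
        intro i hi
        rw [Finset.mem_Icc] at hi
        rw [hAdef, Finset.mem_filter, Finset.mem_Icc]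
        exact ⟨⟨hi.1, le_trans hi.2 hm2⟩,
          le_trans (mono (r' + 1) (by omega) le_rfl m' i hi.1 hi.2 hm2) h⟩
      have := Finset.card_le_card hsub
      rw [Nat.card_Icc] at this
      omega
    · intro h
      by_contra hc
      push_neg at hc
      have hsub : A ⊆ Finset.Icc 1 (m' - 1) := by
        intro i hi
        rw [hAdef, Finset.mem_filter, Finset.mem_Icc] at hi
        rw [Finset.mem_Icc]
        refine ⟨hi.1.1, ?_⟩
        by_contra hge
        have him : m' ≤ i := by omega
        have := mono (r' + 1) (by omega) le_rfl i m' hm1 him hi.1.2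
        omega
      have := Finset.card_le_card hsub
      rw [Nat.card_Icc] at this
      omega
  constructor
  · have h := (main 0 (by omega) k (by omega) (Nat.le_mul_of_pos_right k (by omega))).2
      (by omega)
    simpa using h
  · intro m' l hkm' hm'kn hl2 hub hlb
    obtain ⟨l'', rfl⟩ : ∃ l'', l = l'' + 2 := ⟨l - 2, by omega⟩
    have hub' : m' ≤ k * ((r' + 1) * (l'' + 1) + 1) := by
      have : (l'' + 2) - 1 = l'' + 1 := by omega
      rwa [this] at hub
    have hlb' : k * ((r' + 1) * l'' + 1) < m' := by
      have : (l'' + 2) - 2 = l'' := by omega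
      rwa [this] at hlb
    -- l'' ≤ q - 1
    have hlq : l'' + 1 ≤ q := by
      by_contra hgt
      have hql : q ≤ l'' := by omega
      have h1 : (r' + 1) * q ≤ (r' + 1) * l'' := Nat.mul_le_mul_left _ hql
      have h2 : k * ((r' + 1) * q + 1) ≤ k * ((r' + 1) * l'' + 1) :=
        Nat.mul_le_mul_left _ (by omega)
      have h3 : k * n = k * ((r' + 1) * q + 1) := by rw [hn]; ring
      omega
    have h1 := (main (l'' + 1) hlq m' (by omega) hm'kn).2 hub'
    have h2 := (main l'' (by omega) m' (by omega) hm'kn).1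
    have h3 : ¬ T m' (r' + 1) ≤ r' * q + 1 + l'' := by
      intro h
      have := h2 h
      omega
    have hgoal : (r' + 1 - 1) * q + (l'' + 2) = r' * q + 1 + (l'' + 1) := by
      simp
      omega
    omega
end

section
/- Let $r,q\ge 1$, $n=qr+1$, $k\ge 1$, and let $T$ be a $(kn)\times r$ array satisfying: rows strictly increasing, columns weakly increasing, every value appears exactly $rk$ times, $T(kn,j)\le jq+1$ for all $j$, and $T(1,j)\ge (j-2)q+m_{j-1}+1$ for $2\le j\le r$ with fixed $1\le m_i\le q$. Fix $1\le j\le r-1$. Then: (i) for $2\le l\le m_j$, $T(m,j)=(j-1)q+l$ for all $k(r(l-1)-j+1)+1\le m\le k(rl-j+1)$; and (ii) for $m_j+1\le l\le q+1$, $T(m,j)=(j-1)q+l$ for all $k(r(l-1)-j+1)+1\le m\le k(r(l-1)+1)$. -/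
/-! For a threshold `s` let `c_j(s)` be the number of entries `≤ s` in column `j`. Since every
value occurs `rk` times, `∑_j c_j(s) = s·rk`, and since columns increase, the rows `i` with
`T i j ≤ s` are exactly `1, …, c_j(s)`. The bound `T(kn, j') ≤ j'q + 1` fills the columns left
of `j` once `s > (j-1)q`, and the lower bounds on the first row keep the columns right of `j`
empty up to `(j-1)q + m_j`; solving the counting identity for `c_j` then bounds
`c_j((j-1)q + l - 1)` from above and `c_j((j-1)q + l)` from below by the two ends of the stated
row block. For `l > m_j` the lower bound comes instead from comparing the counts at `(j-1)q + l`
and at `jq + 1`, where column `j` is already full. -/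

open Finset

namespace MonotoneOn

variable {α : Type*} [LinearOrder α] {f : ℕ → α} {N : ℕ}

theorem mem_Ioc_of_card_filter_le_lt_le (hf : MonotoneOn f (Set.Icc 1 N)) {s t : α} {i : ℕ}
    (hs : #{x ∈ Icc 1 N | f x ≤ s} < i) (ht : i ≤ #{x ∈ Icc 1 N | f x ≤ t}) :
    f i ∈ Set.Ioc s t := by
  have hiN : i ≤ N := ht.trans ((card_filter_le _ _).trans (by simp))
  constructor
  · by_contra! his
    have hsub : Icc 1 i ⊆ {x ∈ Icc 1 N | f x ≤ s} := fun x hx => by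
      rw [mem_Icc] at hx
      exact mem_filter.2 ⟨mem_Icc.2 ⟨hx.1, hx.2.trans hiN⟩,
        (hf ⟨hx.1, hx.2.trans hiN⟩ ⟨hx.1.trans hx.2, hiN⟩ hx.2).trans his⟩
    have := card_le_card hsub
    simp only [Nat.card_Icc, add_tsub_cancel_right] at this
    omega
  · by_contra! hti
    have hsub : {x ∈ Icc 1 N | f x ≤ t} ⊆ Icc 1 (i - 1) := fun x hx => by
      rw [mem_filter, mem_Icc] at hx
      have hxi : x < i := by
        by_contra! hix
        exact (hti.trans_le (hf ⟨by omega, hiN⟩ hx.1 hix)).not_ge hx.2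
      exact mem_Icc.2 ⟨hx.1.1, by omega⟩
    have := card_le_card hsub
    simp only [Nat.card_Icc] at this
    omega

theorem card_filter_le_eq_of_le (hf : MonotoneOn f (Set.Icc 1 N)) {s : α} (h : f N ≤ s) :
    #{x ∈ Icc 1 N | f x ≤ s} = N := by
  rw [filter_true_of_mem, Nat.card_Icc, add_tsub_cancel_right]
  intro x hx
  rw [mem_Icc] at hx
  exact (hf ⟨hx.1, hx.2⟩ ⟨hx.1.trans hx.2, le_rfl⟩ hx.2).trans h

theorem card_filter_le_eq_zero_of_lt (hf : MonotoneOn f (Set.Icc 1 N)) {s : α} (h : s < f 1) :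
    #{x ∈ Icc 1 N | f x ≤ s} = 0 := by
  rw [card_eq_zero, filter_eq_empty_iff]
  intro x hx
  rw [mem_Icc] at hx
  exact (h.trans_le (hf ⟨le_rfl, hx.1.trans hx.2⟩ ⟨hx.1, hx.2⟩ hx.1)).not_ge

end MonotoneOn

theorem Finset.card_filter_le_eq_mul {ι : Type*} {S : Finset ι} {f : ι → ℕ}
    (hpos : ∀ p ∈ S, 1 ≤ f p) {c s : ℕ} (hc : ∀ t ∈ Icc 1 s, #{p ∈ S | f p = t} = c) :
    #{p ∈ S | f p ≤ s} = s * c := by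
  rw [card_eq_sum_card_fiberwise (f := f) (t := Icc 1 s), sum_const_nat, Nat.card_Icc,
    add_tsub_cancel_right]
  · intro t ht
    rw [filter_filter, ← hc t ht]
    rw [mem_Icc] at ht
    exact congrArg card (filter_congr fun p _ => by omega)
  · intro p hp
    rw [coe_filter] at hp
    exact mem_Icc.2 ⟨hpos p hp.1, hp.2⟩

theorem Finset.card_filter_product {α β : Type*} (s : Finset α) (t : Finset β)
    (P : α × β → Prop) [DecidablePred P] :
    #{p ∈ s ×ˢ t | P p} = ∑ b ∈ t, #{a ∈ s | P (a, b)} := by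
  simp only [card_filter, sum_product_right]

theorem Finset.sum_Icc_eq_sum_Ico_add_add_sum_Ioc {M : Type*} [AddCommMonoid M] (a : ℕ → M)
    {j r : ℕ} (hj : j ∈ Icc 1 r) :
    ∑ i ∈ Icc 1 r, a i = ∑ i ∈ Ico 1 j, a i + a j + ∑ i ∈ Ioc j r, a i := by
  rw [mem_Icc] at hj
  rw [← Ico_add_one_right_eq_Icc, ← sum_Ico_consecutive a hj.1 (by omega : j ≤ r + 1),
    sum_eq_sum_Ico_succ_bot (by omega : j < r + 1), ← Icc_add_one_left_eq_Ioc,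
    ← Ico_add_one_right_eq_Icc, add_assoc]

theorem Finset.sum_add_tsub_le_sum {ι : Type*} {s : Finset ι} {a b : ι → ℕ}
    (hab : ∀ i ∈ s, a i ≤ b i) {i : ι} (hi : i ∈ s) :
    ∑ x ∈ s, a x + (b i - a i) ≤ ∑ x ∈ s, b x := by
  calc ∑ x ∈ s, a x + (b i - a i) ≤ ∑ x ∈ s, a x + ∑ x ∈ s, (b x - a x) :=
        Nat.add_le_add_left
          (single_le_sum (f := fun x => b x - a x) (fun x _ => Nat.zero_le _) hi) _
    _ = ∑ x ∈ s, b x := by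
        rw [← sum_add_distrib]
        exact sum_congr rfl fun x hx => Nat.add_sub_cancel' (hab x hx)

theorem sub_one_mul_add_self (j q : ℕ) (hj : 1 ≤ j) : (j - 1) * q + q = j * q := by
  rw [← Nat.succ_mul, Nat.succ_eq_add_one, Nat.sub_add_cancel hj]

def colCount (T : ℕ → ℕ → ℕ) (N j s : ℕ) : ℕ := #{i ∈ Icc 1 N | T i j ≤ s}

theorem colCount_le_rows (T : ℕ → ℕ → ℕ) (N j s : ℕ) : colCount T N j s ≤ N :=
  (card_filter_le _ _).trans (by simp)

theorem colCount_mono (T : ℕ → ℕ → ℕ) (N j : ℕ) : Monotone (colCount T N j) :=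
  fun _ _ hst => card_le_card fun i hi => by
    rw [mem_filter] at hi ⊢
    exact ⟨hi.1, hi.2.trans hst⟩

section colCount

variable {T : ℕ → ℕ → ℕ} {N r q k n j l : ℕ}

theorem sum_colCount_eq_mul {c s : ℕ} (hpos : ∀ p ∈ Icc 1 N ×ˢ Icc 1 r, 1 ≤ T p.1 p.2)
    (hc : ∀ t ∈ Icc 1 s, #{p ∈ Icc 1 N ×ˢ Icc 1 r | T p.1 p.2 = t} = c) :
    ∑ j ∈ Icc 1 r, colCount T N j s = s * c := by
  rw [← card_filter_le_eq_mul hpos hc, card_filter_product]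
  rfl

theorem colCount_le_of_left_full (hn : n = q * r + 1) (hj : j ∈ Icc 1 r)
    (hl : l ∈ Icc 2 (q + 1))
    (hsum : ∀ s ≤ n, ∑ j' ∈ Icc 1 r, colCount T (k * n) j' s = s * (r * k))
    (hfull : ∀ j' ∈ Icc 1 r, ∀ s, j' * q + 1 ≤ s → colCount T (k * n) j' s = k * n) :
    colCount T (k * n) j ((j - 1) * q + (l - 1)) ≤ k * (r * (l - 1) + 1 - j) := by
  rw [mem_Icc] at hj hl
  have hjq : j * q ≤ q * r := by rw [mul_comm]; exact Nat.mul_le_mul_left q hj.2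
  have hleft :
      ∑ j' ∈ Ico 1 j, colCount T (k * n) j' ((j - 1) * q + (l - 1)) = (j - 1) * (k * n) := by
    rw [sum_const_nat fun j' hj' => ?_, Nat.card_Ico]
    rw [mem_Ico] at hj'
    exact hfull j' (mem_Icc.2 ⟨hj'.1, by omega⟩) _
      (by have := Nat.mul_le_mul_right q (Nat.le_sub_one_of_lt hj'.2); omega)
  have hsplit := sum_Icc_eq_sum_Ico_add_add_sum_Ioc
    (colCount T (k * n) · ((j - 1) * q + (l - 1))) (mem_Icc.2 hj)
  have hid :
      ((j - 1) * q + (l - 1)) * (r * k) = (j - 1) * (k * n) + k * (r * (l - 1) + 1 - j) := by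
    have : j ≤ r * (l - 1) + 1 := by
      have := Nat.le_mul_of_pos_right r (by omega : 0 < l - 1); omega
    subst hn
    zify [this, hj.1, hl.1.trans' one_le_two]
    ring
  have hs := sub_one_mul_add_self j q hj.1
  rw [hsum ((j - 1) * q + (l - 1)) (by omega), hleft] at hsplit
  omega

theorem le_colCount_of_right_empty {m : ℕ} (hn : n = q * r + 1) (hj : j ∈ Icc 1 r)
    (hl : l ∈ Icc 1 m) (hmq : m ≤ q)
    (hsum : ∀ s ≤ n, ∑ j' ∈ Icc 1 r, colCount T (k * n) j' s = s * (r * k))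
    (hright : ∀ j' ∈ Ioc j r, colCount T (k * n) j' ((j - 1) * q + m) = 0) :
    k * (r * l + 1 - j) ≤ colCount T (k * n) j ((j - 1) * q + l) := by
  rw [mem_Icc] at hj hl
  have hjq : j * q ≤ q * r := by rw [mul_comm]; exact Nat.mul_le_mul_left q hj.2
  have hleft : ∑ j' ∈ Ico 1 j, colCount T (k * n) j' ((j - 1) * q + l) ≤ (j - 1) * (k * n) :=
    (sum_le_card_nsmul _ _ _ fun j' _ => colCount_le_rows T (k * n) j' _).trans_eq
      (by rw [Nat.card_Ico, smul_eq_mul])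
  have hzero : ∑ j' ∈ Ioc j r, colCount T (k * n) j' ((j - 1) * q + l) = 0 :=
    sum_eq_zero fun j' hj' => Nat.le_zero.1 <|
      (colCount_mono T (k * n) j' (by omega)).trans (hright j' hj').le
  have hsplit := sum_Icc_eq_sum_Ico_add_add_sum_Ioc
    (colCount T (k * n) · ((j - 1) * q + l)) (mem_Icc.2 hj)
  have hid : ((j - 1) * q + l) * (r * k) = (j - 1) * (k * n) + k * (r * l + 1 - j) := by
    have : j ≤ r * l + 1 := by
      have := Nat.le_mul_of_pos_right r (by omega : 0 < l); omega
    subst hn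
    zify [this, hj.1]
    ring
  have hs := sub_one_mul_add_self j q hj.1
  rw [hsum ((j - 1) * q + l) (by omega), hzero] at hsplit
  omega

theorem le_colCount_of_full (hn : n = q * r + 1) (hj : j ∈ Icc 1 r) (hl : l ∈ Icc 1 (q + 1))
    (hsum : ∀ s ≤ n, ∑ j' ∈ Icc 1 r, colCount T (k * n) j' s = s * (r * k))
    (hfull : colCount T (k * n) j (j * q + 1) = k * n) :
    k * (r * (l - 1) + 1) ≤ colCount T (k * n) j ((j - 1) * q + l) := by
  rw [mem_Icc] at hj hl
  have hjq : j * q ≤ q * r := by rw [mul_comm]; exact Nat.mul_le_mul_left q hj.2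
  have hjq' := sub_one_mul_add_self j q hj.1
  have hts : (j - 1) * q + l ≤ j * q + 1 := by omega
  have hdiff := sum_add_tsub_le_sum (fun j' _ => colCount_mono T (k * n) j' hts) (mem_Icc.2 hj)
  have hid : (j * q + 1) * (r * k) = ((j - 1) * q + l) * (r * k) + (q + 1 - l) * (r * k) := by
    rw [← add_mul]; congr 1; omega
  have hN : k * n = k * (r * (l - 1) + 1) + (q + 1 - l) * (r * k) := by
    subst hn
    zify [hl.1, hl.2]
    ring
  rw [hsum ((j - 1) * q + l) (by omega), hsum (j * q + 1) (by omega), hfull] at hdiff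
  omega

end colCount

theorem lt_top_entry_of_mem_Ioc {T : ℕ → ℕ → ℕ} {m : ℕ → ℕ} {r q j j' : ℕ}
    (hfirst : ∀ j, 2 ≤ j → j ≤ r → (j - 2) * q + m (j - 1) + 1 ≤ T 1 j)
    (hj : 1 ≤ j) (hmq : m j ≤ q) (hj' : j' ∈ Ioc j r) : (j - 1) * q + m j < T 1 j' := by
  rw [mem_Ioc] at hj'
  have hT := hfirst j' (by omega) hj'.2
  rcases (Nat.succ_le_of_lt hj'.1).eq_or_lt with rfl | hlt
  · simpa using hT
  · have := Nat.mul_le_mul_right q (by omega : j - 1 + 1 ≤ j' - 2)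
    rw [add_one_mul] at this
    omega

theorem column_blocks_general
    (r q : ℕ) (n : ℕ) (hn : n = q * r + 1)
    (k : ℕ)
    (m : ℕ → ℕ) (hm : ∀ i : ℕ, 1 ≤ i → i ≤ r - 1 → 1 ≤ m i ∧ m i ≤ q)
    (T : ℕ → ℕ → ℕ)
    (hentries : ∀ i j : ℕ, 1 ≤ i → i ≤ k * n → 1 ≤ j → j ≤ r → 1 ≤ T i j ∧ T i j ≤ n)
    (hcols : ∀ i j : ℕ, 1 ≤ i → i < k * n → 1 ≤ j → j ≤ r → T i j ≤ T (i + 1) j)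
    (hcount : ∀ t : ℕ, 1 ≤ t → t ≤ n →
      (((Finset.Icc 1 (k * n)) ×ˢ (Finset.Icc 1 r)).filter
        (fun p => T p.1 p.2 = t)).card = r * k)
    (hlast : ∀ j : ℕ, 1 ≤ j → j ≤ r → T (k * n) j ≤ j * q + 1)
    (hfirst : ∀ j : ℕ, 2 ≤ j → j ≤ r → (j - 2) * q + m (j - 1) + 1 ≤ T 1 j)
    (j : ℕ) (hj1 : 1 ≤ j) (hjr : j ≤ r - 1) :
    (∀ l : ℕ, 2 ≤ l → l ≤ m j →
      ∀ i : ℕ, k * (r * (l - 1) + 1 - j) + 1 ≤ i → i ≤ k * (r * l + 1 - j) →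
        T i j = (j - 1) * q + l) ∧
    (∀ l : ℕ, m j + 1 ≤ l → l ≤ q + 1 →
      ∀ i : ℕ, k * (r * (l - 1) + 1 - j) + 1 ≤ i → i ≤ k * (r * (l - 1) + 1) →
        T i j = (j - 1) * q + l) := by
  have hj : j ∈ Icc 1 r := mem_Icc.2 ⟨hj1, hjr.trans (Nat.sub_le r 1)⟩
  obtain ⟨hmj1, hmj⟩ := hm j hj1 hjr
  have hmono : ∀ j' ∈ Icc 1 r, MonotoneOn (T · j') (Set.Icc 1 (k * n)) := fun j' hj' =>
    monotoneOn_of_le_add_one Set.ordConnected_Icc fun i _ hi hi' =>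
      hcols i j' hi.1 (Nat.lt_of_succ_le hi'.2) (mem_Icc.1 hj').1 (mem_Icc.1 hj').2
  have hsum : ∀ s ≤ n, ∑ j' ∈ Icc 1 r, colCount T (k * n) j' s = s * (r * k) := fun s hs =>
    sum_colCount_eq_mul
      (fun p hp => by
        simp only [mem_product, mem_Icc] at hp
        exact (hentries p.1 p.2 hp.1.1 hp.1.2 hp.2.1 hp.2.2).1)
      (fun t ht => hcount t (mem_Icc.1 ht).1 ((mem_Icc.1 ht).2.trans hs))
  have hfull : ∀ j' ∈ Icc 1 r, ∀ s, j' * q + 1 ≤ s → colCount T (k * n) j' s = k * n :=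
    fun j' hj' _ hs => (hmono j' hj').card_filter_le_eq_of_le
      ((hlast j' (mem_Icc.1 hj').1 (mem_Icc.1 hj').2).trans hs)
  have hright : ∀ j' ∈ Ioc j r, colCount T (k * n) j' ((j - 1) * q + m j) = 0 := fun j' hj' =>
    have hj'r : j' ∈ Icc 1 r := Ioc_subset_Icc_self.trans (Icc_subset_Icc_left hj1) hj'
    (hmono j' hj'r).card_filter_le_eq_zero_of_lt (lt_top_entry_of_mem_Ioc hfirst hj1 hmj hj')
  refine ⟨fun l hl2 hlm i hi1 hi2 => ?_, fun l hl1 hlq i hi1 hi2 => ?_⟩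
  · obtain ⟨h1, h2⟩ := (hmono j hj).mem_Ioc_of_card_filter_le_lt_le
      ((colCount_le_of_left_full hn hj (mem_Icc.2 ⟨hl2, by omega⟩) hsum hfull).trans_lt hi1)
      (hi2.trans (le_colCount_of_right_empty hn hj (mem_Icc.2 ⟨by omega, hlm⟩) hmj hsum hright))
    omega
  · obtain ⟨h1, h2⟩ := (hmono j hj).mem_Ioc_of_card_filter_le_lt_le
      ((colCount_le_of_left_full hn hj (mem_Icc.2 ⟨by omega, hlq⟩) hsum hfull).trans_lt hi1)
      (hi2.trans (le_colCount_of_full hn hj (mem_Icc.2 ⟨by omega, hlq⟩) hsum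
        (hfull j hj _ le_rfl)))
    omega

/-- Lemma 3.4 of the paper: blocks of constant entries in column `j` of a
balanced standard tableau supported on `X^{v_m}_{w_{r,n}}`. -/
theorem column_blocks
    (r q : ℕ) (hr : 0 < r) (hq : 0 < q) (n : ℕ) (hn : n = q * r + 1)
    (k : ℕ) (hk : 0 < k)
    (m : ℕ → ℕ) (hm : ∀ i : ℕ, 1 ≤ i → i ≤ r - 1 → 1 ≤ m i ∧ m i ≤ q)
    (T : ℕ → ℕ → ℕ)
    (hentries : ∀ i j : ℕ, 1 ≤ i → i ≤ k * n → 1 ≤ j → j ≤ r → 1 ≤ T i j ∧ T i j ≤ n)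
    (hrows : ∀ i j : ℕ, 1 ≤ i → i ≤ k * n → 1 ≤ j → j < r → T i j < T i (j + 1))
    (hcols : ∀ i j : ℕ, 1 ≤ i → i < k * n → 1 ≤ j → j ≤ r → T i j ≤ T (i + 1) j)
    (hcount : ∀ t : ℕ, 1 ≤ t → t ≤ n →
      (((Finset.Icc 1 (k * n)) ×ˢ (Finset.Icc 1 r)).filter
        (fun p => T p.1 p.2 = t)).card = r * k)
    (hlast : ∀ j : ℕ, 1 ≤ j → j ≤ r → T (k * n) j ≤ j * q + 1)
    (hfirst : ∀ j : ℕ, 2 ≤ j → j ≤ r → (j - 2) * q + m (j - 1) + 1 ≤ T 1 j)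
    (j : ℕ) (hj1 : 1 ≤ j) (hjr : j ≤ r - 1) :
    (∀ l : ℕ, 2 ≤ l → l ≤ m j →
      ∀ i : ℕ, k * (r * (l - 1) + 1 - j) + 1 ≤ i → i ≤ k * (r * l + 1 - j) →
        T i j = (j - 1) * q + l) ∧
    (∀ l : ℕ, m j + 1 ≤ l → l ≤ q + 1 →
      ∀ i : ℕ, k * (r * (l - 1) + 1 - j) + 1 ≤ i → i ≤ k * (r * (l - 1) + 1) →
        T i j = (j - 1) * q + l) :=
  column_blocks_general r q n hn k m hm T hentries hcols hcount hlast hfirst j hj1 hjr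
end

section
/- Let $r,q\ge 1$, $n=qr+1$, $k\ge 1$, and let $T$ be a $(kn)\times r$ array satisfying: rows strictly increasing, columns weakly increasing, every value appears exactly $rk$ times, $T(kn,j)\le jq+1$ for all $j$, and $T(1,j)\ge (j-2)q+m_{j-1}+1$ for $2\le j\le r$ with fixed $1\le m_i\le q$. Fix $1\le j\le r-1$ and $m_j+2\le l\le q+1$. Then for all $k(r(l-2)+1)+1\le m\le k(r(l-1)-j+1)$, the entry $T(m,j)$ equals either $(j-1)q+l-1$ or $(j-1)q+l$. -/
/-- Corollary 3.5 of the paper: a two-value constraint on column `j` of a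
balanced standard tableau supported on `X^{v_m}_{w_{r,n}}`. -/
theorem column_two_values
    (r q : ℕ) (hr : 0 < r) (hq : 0 < q) (n : ℕ) (hn : n = q * r + 1)
    (k : ℕ) (hk : 0 < k)
    (m : ℕ → ℕ) (hm : ∀ i : ℕ, 1 ≤ i → i ≤ r - 1 → 1 ≤ m i ∧ m i ≤ q)
    (T : ℕ → ℕ → ℕ)
    (hentries : ∀ i j : ℕ, 1 ≤ i → i ≤ k * n → 1 ≤ j → j ≤ r → 1 ≤ T i j ∧ T i j ≤ n)
    (hrows : ∀ i j : ℕ, 1 ≤ i → i ≤ k * n → 1 ≤ j → j < r → T i j < T i (j + 1))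
    (hcols : ∀ i j : ℕ, 1 ≤ i → i < k * n → 1 ≤ j → j ≤ r → T i j ≤ T (i + 1) j)
    (hcount : ∀ t : ℕ, 1 ≤ t → t ≤ n →
      (((Finset.Icc 1 (k * n)) ×ˢ (Finset.Icc 1 r)).filter
        (fun p => T p.1 p.2 = t)).card = r * k)
    (hlast : ∀ j : ℕ, 1 ≤ j → j ≤ r → T (k * n) j ≤ j * q + 1)
    (hfirst : ∀ j : ℕ, 2 ≤ j → j ≤ r → (j - 2) * q + m (j - 1) + 1 ≤ T 1 j)
    (j : ℕ) (hj1 : 1 ≤ j) (hjr : j ≤ r - 1)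
    (l : ℕ) (hl1 : m j + 2 ≤ l) (hl2 : l ≤ q + 1) :
    ∀ i : ℕ, k * (r * (l - 2) + 1) + 1 ≤ i → i ≤ k * (r * (l - 1) + 1 - j) →
      T i j = (j - 1) * q + l - 1 ∨ T i j = (j - 1) * q + l := by
  obtain ⟨hm1, hm2⟩ := hm j hj1 hjr
  obtain ⟨l', rfl⟩ : ∃ l', l = l' + 3 := ⟨l - 3, by omega⟩
  obtain ⟨j', rfl⟩ : ∃ j', j = j' + 1 := ⟨j - 1, by omega⟩
  intro i hi1 hi2
  have hi1' : k * (r * (l' + 1) + 1) + 1 ≤ i := hi1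
  have hi2' : i ≤ k * (r * (l' + 2) + 1 - (j' + 1)) := hi2
  have hrj : j' + 2 ≤ r := by omega
  have hlq : l' + 2 ≤ q := by omega
  -- column monotonicity
  have colmono' : ∀ c a d : ℕ, 1 ≤ c → c ≤ r → 1 ≤ a → a + d ≤ k * n →
      T a c ≤ T (a + d) c := by
    intro c a d hc1 hc2 ha
    induction d with
    | zero => intro _; exact le_refl _
    | succ d ih =>
      intro hd
      have h1 := ih (by omega)
      have h2 : T (a + d) c ≤ T (a + d + 1) c :=
        hcols (a + d) c (by omega) (by omega) hc1 hc2
      exact h1.trans h2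
  have colmono : ∀ c a b : ℕ, 1 ≤ c → c ≤ r → 1 ≤ a → a ≤ b → b ≤ k * n →
      T a c ≤ T b c := by
    intro c a b hc1 hc2 ha hab hb
    have := colmono' c a (b - a) hc1 hc2 ha (by omega)
    rwa [Nat.add_sub_cancel' hab] at this
  -- counting of entries ≤ t
  have countLe : ∀ t : ℕ, t ≤ n →
      (((Finset.Icc 1 (k * n)) ×ˢ (Finset.Icc 1 r)).filter
        (fun p => T p.1 p.2 ≤ t)).card = t * (r * k) := by
    intro t
    induction t with
    | zero =>
      intro _
      rw [Nat.zero_mul, Finset.card_eq_zero, Finset.filter_eq_empty_iff]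
      intro p hp
      rw [Finset.mem_product, Finset.mem_Icc, Finset.mem_Icc] at hp
      have := hentries p.1 p.2 hp.1.1 hp.1.2 hp.2.1 hp.2.2
      omega
    | succ t ih =>
      intro ht
      have hsplit : (((Finset.Icc 1 (k * n)) ×ˢ (Finset.Icc 1 r)).filter
            (fun p => T p.1 p.2 ≤ t + 1))
          = (((Finset.Icc 1 (k * n)) ×ˢ (Finset.Icc 1 r)).filter
              (fun p => T p.1 p.2 ≤ t))
            ∪ (((Finset.Icc 1 (k * n)) ×ˢ (Finset.Icc 1 r)).filter
              (fun p => T p.1 p.2 = t + 1)) := by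
        rw [← Finset.filter_or]
        apply Finset.filter_congr
        intro p _
        constructor
        · intro h; omega
        · intro h; omega
      rw [hsplit, Finset.card_union_of_disjoint, ih (by omega),
        hcount (t + 1) (by omega) ht]
      · ring
      · rw [Finset.disjoint_left]
        intro p hp1 hp2
        rw [Finset.mem_filter] at hp1 hp2
        omega
  -- numeric bounds on thresholds
  have hjq : (j' + 1) * q = j' * q + q := by ring
  have hb1 : (j' + 1) * q + 1 ≤ n := by
    rw [hn]
    have h1 : (j' + 1) * q ≤ r * q := Nat.mul_le_mul (by omega) (le_refl q)
    have h2 : r * q = q * r := Nat.mul_comm r q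
    omega
  have ht2n : (j' + 1) * q + 1 ≤ n := hb1
  have htn : j' * q + (l' + 3) ≤ n := by omega
  have ht1n : j' * q + (l' + 1) ≤ n := by omega
  -- injectivity of a ↦ (a, c)
  have hinj : ∀ c : ℕ, Function.Injective (fun a : ℕ => (a, c)) := by
    intro c a b hab
    exact congrArg Prod.fst hab
  have hiN : i ≤ k * n := by
    have h1 : k * (r * (l' + 2) + 1 - (j' + 1)) ≤ k * (r * (l' + 2) + 1) :=
      Nat.mul_le_mul (le_refl k) (Nat.sub_le _ _)
    have h2 : r * (l' + 2) ≤ r * q := Nat.mul_le_mul (le_refl r) hlq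
    have h3 : k * (r * (l' + 2) + 1) ≤ k * (q * r + 1) := by
      apply Nat.mul_le_mul (le_refl k)
      have : r * q = q * r := Nat.mul_comm r q
      omega
    have h4 : k * (q * r + 1) = k * n := by rw [hn]
    omega
  have hi1pos : 1 ≤ i := by omega
  ------------------------------------------------------------------
  -- UPPER BOUND : T i (j'+1) ≤ j'*q + (l'+3)
  ------------------------------------------------------------------
  have hTiu : T i (j' + 1) ≤ j' * q + (l' + 3) := by
    by_contra hcon
    push_neg at hcon
    -- S1 : rows of column j'+1 with entry ≤ t ; S1' the complement rows
    set F1 := (((Finset.Icc 1 (k * n)) ×ˢ (Finset.Icc 1 r)).filter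
      (fun p => T p.1 p.2 ≤ j' * q + (l' + 3))) with hF1
    set F2 := (((Finset.Icc 1 (k * n)) ×ˢ (Finset.Icc 1 r)).filter
      (fun p => T p.1 p.2 ≤ (j' + 1) * q + 1)) with hF2
    set S1 := ((Finset.Icc 1 (k * n)).filter
      (fun a => T a (j' + 1) ≤ j' * q + (l' + 3))) with hS1
    set S1' := ((Finset.Icc 1 (k * n)).filter
      (fun a => ¬ T a (j' + 1) ≤ j' * q + (l' + 3))) with hS1'
    have hF1card : F1.card = (j' * q + (l' + 3)) * (r * k) := countLe _ htn
    have hF2card : F2.card = ((j' + 1) * q + 1) * (r * k) := countLe _ ht2n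
    have hF12 : F1 ⊆ F2 := by
      rw [hF1, hF2]
      intro p hp
      rw [Finset.mem_filter] at hp ⊢
      exact ⟨hp.1, by omega⟩
    have hpart : S1.card + S1'.card = k * n := by
      rw [hS1, hS1', Finset.card_filter_add_card_filter_not, Nat.card_Icc]
      omega
    have himg : S1'.image (fun a => (a, j' + 1)) ⊆ F2 \ F1 := by
      intro p hp
      rw [Finset.mem_image] at hp
      obtain ⟨a, ha, rfl⟩ := hp
      rw [hS1', Finset.mem_filter, Finset.mem_Icc] at ha
      rw [Finset.mem_sdiff, hF1, hF2, Finset.mem_filter, Finset.mem_filter]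
      have hmem : (a, j' + 1) ∈ (Finset.Icc 1 (k * n)) ×ˢ (Finset.Icc 1 r) := by
        rw [Finset.mem_product, Finset.mem_Icc, Finset.mem_Icc]
        exact ⟨⟨ha.1.1, ha.1.2⟩, by omega, by omega⟩
      refine ⟨⟨hmem, ?_⟩, ?_⟩
      · have h1 : T a (j' + 1) ≤ T (k * n) (j' + 1) :=
          colmono (j' + 1) a (k * n) (by omega) (by omega) ha.1.1 ha.1.2 (le_refl _)
        have h2 := hlast (j' + 1) (by omega) (by omega)
        exact h1.trans h2
      · intro hcontra
        exact ha.2 hcontra.2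
    have hS1'card : S1'.card ≤ (F2 \ F1).card := by
      have h1 : (S1'.image (fun a => (a, j' + 1))).card = S1'.card :=
        Finset.card_image_of_injective _ (hinj (j' + 1))
      rw [← h1]
      exact Finset.card_le_card himg
    have hsd : (F2 \ F1).card + F1.card = F2.card :=
      Finset.card_sdiff_add_card_eq_card hF12
    -- rows 1..i of column j'+1 all exceed the threshold, so S1 ⊆ [1, i-1]
    have hsub : S1 ⊆ Finset.Icc 1 (i - 1) := by
      intro a ha
      rw [hS1, Finset.mem_filter, Finset.mem_Icc] at ha
      rw [Finset.mem_Icc]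
      refine ⟨ha.1.1, ?_⟩
      by_contra hai
      push_neg at hai
      have : T i (j' + 1) ≤ T a (j' + 1) :=
        colmono (j' + 1) i a (by omega) (by omega) hi1pos (by omega) ha.1.2
      omega
    have hScard : S1.card ≤ i - 1 := by
      have := Finset.card_le_card hsub
      rw [Nat.card_Icc] at this
      omega
    -- arithmetic identity linking all quantities
    have e3 : k * (r * (l' + 2) + 1) + ((j' + 1) * q + 1) * (r * k)
        = k * n + (j' * q + (l' + 3)) * (r * k) := by
      rw [hn]; ring
    have e4 : i ≤ k * (r * (l' + 2) + 1) := by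
      have h1 : k * (r * (l' + 2) + 1 - (j' + 1)) ≤ k * (r * (l' + 2) + 1) :=
        Nat.mul_le_mul (le_refl k) (Nat.sub_le _ _)
      omega
    omega
  ------------------------------------------------------------------
  -- LOWER BOUND : j'*q + (l'+2) ≤ T i (j'+1)
  ------------------------------------------------------------------
  have hTil : j' * q + (l' + 2) ≤ T i (j' + 1) := by
    by_contra hcon
    push_neg at hcon
    have hTle : T i (j' + 1) ≤ j' * q + (l' + 1) := by omega
    set F0 := (((Finset.Icc 1 (k * n)) ×ˢ (Finset.Icc 1 r)).filter
      (fun p => T p.1 p.2 ≤ j' * q + (l' + 1))) with hF0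
    set S2 := ((Finset.Icc 1 (k * n)).filter
      (fun a => T a (j' + 1) ≤ j' * q + (l' + 1))) with hS2
    have hF0card : F0.card = (j' * q + (l' + 1)) * (r * k) := countLe _ ht1n
    -- the block of the first j' columns together with S2 injects into F0
    set Blk := (Finset.Icc 1 (k * n)) ×ˢ (Finset.Icc 1 j') with hBlk
    have hBlkF0 : Blk ⊆ F0 := by
      intro p hp
      rw [hBlk, Finset.mem_product, Finset.mem_Icc, Finset.mem_Icc] at hp
      rw [hF0, Finset.mem_filter]
      constructor
      · rw [Finset.mem_product, Finset.mem_Icc, Finset.mem_Icc]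
        exact ⟨⟨hp.1.1, hp.1.2⟩, hp.2.1, by omega⟩
      · have h1 : T p.1 p.2 ≤ T (k * n) p.2 :=
          colmono p.2 p.1 (k * n) hp.2.1 (by omega) hp.1.1 hp.1.2 (le_refl _)
        have h2 := hlast p.2 hp.2.1 (by omega)
        have h3 : p.2 * q ≤ j' * q := Nat.mul_le_mul hp.2.2 (le_refl q)
        omega
    have himg2 : S2.image (fun a => (a, j' + 1)) ⊆ F0 := by
      intro p hp
      rw [Finset.mem_image] at hp
      obtain ⟨a, ha, rfl⟩ := hp
      rw [hS2, Finset.mem_filter, Finset.mem_Icc] at ha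
      rw [hF0, Finset.mem_filter]
      constructor
      · rw [Finset.mem_product, Finset.mem_Icc, Finset.mem_Icc]
        exact ⟨⟨ha.1.1, ha.1.2⟩, by omega, by omega⟩
      · exact ha.2
    have hdisj : Disjoint Blk (S2.image (fun a => (a, j' + 1))) := by
      rw [Finset.disjoint_left]
      intro p hp1 hp2
      rw [hBlk, Finset.mem_product, Finset.mem_Icc, Finset.mem_Icc] at hp1
      rw [Finset.mem_image] at hp2
      obtain ⟨a, _, rfl⟩ := hp2
      omega
    have hcard2 : Blk.card + S2.card ≤ F0.card := by
      have h1 : (Blk ∪ S2.image (fun a => (a, j' + 1))).card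
          = Blk.card + (S2.image (fun a => (a, j' + 1))).card :=
        Finset.card_union_of_disjoint hdisj
      have h2 : (S2.image (fun a => (a, j' + 1))).card = S2.card :=
        Finset.card_image_of_injective _ (hinj (j' + 1))
      have h3 : (Blk ∪ S2.image (fun a => (a, j' + 1))) ⊆ F0 :=
        Finset.union_subset hBlkF0 himg2
      have h4 := Finset.card_le_card h3
      omega
    have hBlkcard : Blk.card = (k * n) * j' := by
      rw [hBlk, Finset.card_product, Nat.card_Icc, Nat.card_Icc]
      simp
    -- rows 1..i of column j'+1 are all ≤ threshold, so Icc 1 i ⊆ S2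
    have hsub2 : Finset.Icc 1 i ⊆ S2 := by
      intro a ha
      rw [Finset.mem_Icc] at ha
      rw [hS2, Finset.mem_filter, Finset.mem_Icc]
      refine ⟨⟨ha.1, by omega⟩, ?_⟩
      have : T a (j' + 1) ≤ T i (j' + 1) :=
        colmono (j' + 1) a i (by omega) (by omega) ha.1 ha.2 hiN
      omega
    have hScard2 : i ≤ S2.card := by
      have := Finset.card_le_card hsub2
      rw [Nat.card_Icc] at this
      omega
    have e5 : (j' * q + (l' + 1)) * (r * k) + (j' + 1) * k
        = (k * n) * j' + k * (r * (l' + 1) + 1) := by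
      rw [hn]; ring
    omega
  exact by
    rcases Nat.eq_or_lt_of_le hTil with h | h
    · exact Or.inl h.symm
    · exact Or.inr (le_antisymm hTiu h)
end

section
/- Let $r,q\ge 1$, $n=qr+1$, $k\ge 1$, and let $T$ be a $(kn)\times r$ array satisfying: rows strictly increasing, columns weakly increasing, every value appears exactly $rk$ times, $T(kn,j)\le jq+1$ for all $j$, and $T(1,j)\ge (j-2)q+m_{j-1}+1$ for $2\le j\le r$ with fixed $1\le m_i\le q$. Fix $1\le j\le r-1$ and $3\le l\le q+1$. Let $N_{t,j+1}$ denote the number of occurrences of value $t$ in column $j+1$. Suppose $n_1\le n_2\le k(r-j)$ are nonnegative integers with $\sum_{t=2}^{l-1}N_{(j-1)q+t,\,j+1}\ge n_1$ and $\sum_{t=2}^{l}N_{(j-1)q+t,\,j+1}\le n_2$. Then $T(m,j)=(j-1)q+l$ for all $k(r(l-1)+1-j)-n_1+1\le m\le k(rl+1-j)-n_2$. -/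
/-! By the first-row and last-row conditions, column `c` of the tableau takes values in
`[(c-2)q+2, cq+1]`. Let `F_c(v)` be the number of rows whose entry in column `c` is at most `v`;
since every value occurs `rk` times, `∑_c F_c(v) = v r k`. For `v = (j-1)q + u` with
`1 ≤ u ≤ q+1`, the columns left of `j` are entirely `≤ v` and those right of `j+1` entirely `> v`,
while `F_{j+1}(v) = ∑_{t=2}^{u} N_{(j-1)q+t, j+1}`. This gives
`F_j((j-1)q+u) = k(ru+1-j) - ∑_{t=2}^{u} N_{(j-1)q+t, j+1}`. As column `j` is weakly increasing,
`T(i,j) ≤ v ↔ i ≤ F_j(v)`, and the bounds on `n₁, n₂` put `i` in `(F_j(v-1), F_j(v)]` for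
`v = (j-1)q+l`. -/

open Finset

lemma card_filter_le_add_eq_sum_card_filter_eq {α : Type*} (s : Finset α) (g : α → ℕ)
    {a c b : ℕ} (hg : ∀ x ∈ s, a + c ≤ g x) :
    #{x ∈ s | g x ≤ a + b} = ∑ t ∈ Icc c b, #{x ∈ s | g x = a + t} := by
  rw [card_eq_sum_card_fiberwise (f := fun x => g x - a) (t := Icc c b)]
  · refine sum_congr rfl fun t ht => ?_
    rw [mem_Icc] at ht
    rw [filter_filter]
    exact congrArg card (filter_congr fun x hx => by have := hg x hx; omega)
  · intro x hx
    simp only [coe_filter, coe_Icc, Set.mem_Icc, Set.mem_ofPred_eq] at hx ⊢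
    have := hg x hx.1
    omega

section MonotoneColumn

variable {f : ℕ → ℕ} {K i v : ℕ}

lemma MonotoneOn.le_card_filter_le (hf : MonotoneOn f (Set.Icc 1 K)) (hi : 1 ≤ i)
    (hiK : i ≤ K) (hv : f i ≤ v) : i ≤ #{x ∈ Icc 1 K | f x ≤ v} := by
  calc i = #(Icc 1 i) := by simp
    _ ≤ _ := card_le_card fun x hx => by
      rw [mem_Icc] at hx
      rw [mem_filter, mem_Icc]
      exact ⟨⟨hx.1, hx.2.trans hiK⟩,
        (hf ⟨hx.1, hx.2.trans hiK⟩ ⟨hi, hiK⟩ hx.2).trans hv⟩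

lemma MonotoneOn.apply_le_of_le_card_filter_le (hf : MonotoneOn f (Set.Icc 1 K)) (hi : 1 ≤ i)
    (hv : i ≤ #{x ∈ Icc 1 K | f x ≤ v}) : f i ≤ v := by
  have hiK : i ≤ K := hv.trans ((card_filter_le _ _).trans (by simp))
  by_contra! hlt
  have hsub : {x ∈ Icc 1 K | f x ≤ v} ⊆ Icc 1 (i - 1) := fun x hx => by
    rw [mem_filter, mem_Icc] at hx
    rw [mem_Icc]
    by_contra! hix
    have := hf ⟨hi, hiK⟩ ⟨hx.1.1, hx.1.2⟩ (by omega)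
    omega
  have := card_le_card hsub
  simp only [Nat.card_Icc] at this
  omega

end MonotoneColumn

lemma sum_Icc_eq_of_eq_below_of_eq_zero_above (G : ℕ → ℕ) {a j r : ℕ} (hj : 1 ≤ j)
    (hjr : j + 1 ≤ r) (hbelow : ∀ c, 1 ≤ c → c < j → G c = a)
    (habove : ∀ c, j + 1 < c → c ≤ r → G c = 0) :
    ∑ c ∈ Icc 1 r, G c = (j - 1) * a + G j + G (j + 1) := by
  induction r, hjr using Nat.le_induction with
  | base =>
    obtain ⟨j, rfl⟩ : ∃ j', j = j' + 1 := ⟨j - 1, by omega⟩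
    rw [sum_Icc_succ_top (by omega), sum_Icc_succ_top (by omega),
      sum_congr rfl fun c hc => hbelow c (mem_Icc.1 hc).1 (by have := (mem_Icc.1 hc).2; omega),
      sum_const, Nat.card_Icc, smul_eq_mul]
  | succ r hr ih =>
    rw [sum_Icc_succ_top (by omega), ih fun c h1 h2 => habove c h1 (by omega),
      habove (r + 1) (by omega) le_rfl, add_zero]

lemma sum_card_filter_le_eq_mul (T : ℕ → ℕ → ℕ) {K r N M w : ℕ}
    (hpos : ∀ i c, 1 ≤ i → i ≤ K → 1 ≤ c → c ≤ r → 1 ≤ T i c)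
    (hcount : ∀ t, 1 ≤ t → t ≤ N → #{p ∈ Icc 1 K ×ˢ Icc 1 r | T p.1 p.2 = t} = M)
    (hw : w ≤ N) :
    ∑ c ∈ Icc 1 r, #{i ∈ Icc 1 K | T i c ≤ w} = w * M := by
  calc ∑ c ∈ Icc 1 r, #{i ∈ Icc 1 K | T i c ≤ w}
      = ∑ c ∈ Icc 1 r, ∑ t ∈ Icc 1 w, #{i ∈ Icc 1 K | T i c = t} := by
        refine sum_congr rfl fun c hc => ?_
        simpa using card_filter_le_add_eq_sum_card_filter_eq (Icc 1 K) (T · c) (a := 0) (c := 1)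
          (b := w) fun i hi => by
            simpa using hpos i c (mem_Icc.1 hi).1 (mem_Icc.1 hi).2 (mem_Icc.1 hc).1 (mem_Icc.1 hc).2
    _ = ∑ t ∈ Icc 1 w, #{p ∈ Icc 1 K ×ˢ Icc 1 r | T p.1 p.2 = t} := by
        rw [sum_comm]
        refine sum_congr rfl fun t _ => ?_
        simp only [card_filter, sum_product]
        exact sum_comm
    _ = w * M := by
        rw [sum_congr rfl fun t ht => hcount t (mem_Icc.1 ht).1 ((mem_Icc.1 ht).2.trans hw)]
        simp

lemma card_filter_le_add_sum_card_filter_eq (T : ℕ → ℕ → ℕ) (u : ℕ) {K k r q j : ℕ}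
    (hK : K = k * (q * r + 1))
    (hpos : ∀ i c, 1 ≤ i → i ≤ K → 1 ≤ c → c ≤ r → 1 ≤ T i c)
    (hcount : ∀ t, 1 ≤ t → t ≤ q * r + 1 → #{p ∈ Icc 1 K ×ˢ Icc 1 r | T p.1 p.2 = t} = r * k)
    (hup : ∀ c i, 1 ≤ c → c ≤ r → 1 ≤ i → i ≤ K → T i c ≤ c * q + 1)
    (hlow : ∀ c i, 2 ≤ c → c ≤ r → 1 ≤ i → i ≤ K → (c - 2) * q + 2 ≤ T i c)
    (hj : 1 ≤ j) (hjr : j + 1 ≤ r) (hu : 1 ≤ u) (hu' : u ≤ q + 1) :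
    #{i ∈ Icc 1 K | T i j ≤ (j - 1) * q + u}
      + ∑ t ∈ Icc 2 u, #{i ∈ Icc 1 K | T i (j + 1) = (j - 1) * q + t} = k * (r * u + 1 - j) := by
  have hjq : (j - 1) * q + q = j * q := by
    rw [← Nat.succ_mul, Nat.succ_eq_add_one, Nat.sub_add_cancel hj]
  have hsum := sum_card_filter_le_eq_mul T hpos hcount (w := (j - 1) * q + u) (by
    have : j * q ≤ r * q := Nat.mul_le_mul_right q (by omega)
    rw [mul_comm q r]; omega)
  rw [sum_Icc_eq_of_eq_below_of_eq_zero_above _ (a := K) hj hjr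
    (fun c hc1 hc2 => ?below) (fun c hc1 hc2 => ?above)] at hsum
  case below =>
    rw [filter_true_of_mem fun i hi => ?_, Nat.card_Icc, Nat.add_sub_cancel]
    have := hup c i hc1 (by omega) (mem_Icc.1 hi).1 (mem_Icc.1 hi).2
    have : c * q ≤ (j - 1) * q := Nat.mul_le_mul_right q (by omega)
    omega
  case above =>
    rw [card_eq_zero, filter_eq_empty_iff]
    intro i hi
    have := hlow c i (by omega) hc2 (mem_Icc.1 hi).1 (mem_Icc.1 hi).2
    have : j * q ≤ (c - 2) * q := Nat.mul_le_mul_right q (by omega)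
    omega
  rw [card_filter_le_add_eq_sum_card_filter_eq _ (fun i => T i (j + 1)) (c := 2) fun i hi => by
    simpa using hlow (j + 1) i (by omega) hjr (mem_Icc.1 hi).1 (mem_Icc.1 hi).2] at hsum
  have key : (j - 1) * K + k * (r * u + 1 - j) = ((j - 1) * q + u) * (r * k) := by
    have : j ≤ r * u + 1 := by nlinarith
    subst hK
    zify [this, hj]
    ring
  omega

theorem interval_lemma_general
    (r q : ℕ) (n : ℕ) (hn : n = q * r + 1)
    (k : ℕ)
    (m : ℕ → ℕ) (hm : ∀ i : ℕ, 1 ≤ i → i ≤ r - 1 → 1 ≤ m i ∧ m i ≤ q)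
    (T : ℕ → ℕ → ℕ)
    (hentries : ∀ i j : ℕ, 1 ≤ i → i ≤ k * n → 1 ≤ j → j ≤ r → 1 ≤ T i j ∧ T i j ≤ n)
    (hcols : ∀ i j : ℕ, 1 ≤ i → i < k * n → 1 ≤ j → j ≤ r → T i j ≤ T (i + 1) j)
    (hcount : ∀ t : ℕ, 1 ≤ t → t ≤ n →
      (((Finset.Icc 1 (k * n)) ×ˢ (Finset.Icc 1 r)).filter
        (fun p => T p.1 p.2 = t)).card = r * k)
    (hlast : ∀ j : ℕ, 1 ≤ j → j ≤ r → T (k * n) j ≤ j * q + 1)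
    (hfirst : ∀ j : ℕ, 2 ≤ j → j ≤ r → (j - 2) * q + m (j - 1) + 1 ≤ T 1 j)
    (j : ℕ) (hj1 : 1 ≤ j) (hjr : j ≤ r - 1)
    (l : ℕ) (hl1 : 3 ≤ l) (hl2 : l ≤ q + 1)
    (n1 n2 : ℕ)
    (hN1 : n1 ≤ ∑ t ∈ Finset.Icc 2 (l - 1),
      ((Finset.Icc 1 (k * n)).filter (fun i => T i (j + 1) = (j - 1) * q + t)).card)
    (hN2 : (∑ t ∈ Finset.Icc 2 l,
      ((Finset.Icc 1 (k * n)).filter (fun i => T i (j + 1) = (j - 1) * q + t)).card) ≤ n2) :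
    ∀ i : ℕ, k * (r * (l - 1) + 1 - j) - n1 + 1 ≤ i → i ≤ k * (r * l + 1 - j) - n2 →
      T i j = (j - 1) * q + l := by
  intro i hi_lo hi_hi
  subst hn
  set K := k * (q * r + 1) with hK
  have hmono : ∀ c, 1 ≤ c → c ≤ r → MonotoneOn (T · c) (Set.Icc 1 K) := fun c hc1 hc2 =>
    monotoneOn_of_le_succ Set.ordConnected_Icc fun i _ hi hi' =>
      hcols i c hi.1 (Order.succ_le_iff.1 hi'.2) hc1 hc2
  have hup : ∀ c i, 1 ≤ c → c ≤ r → 1 ≤ i → i ≤ K → T i c ≤ c * q + 1 :=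
    fun c i hc1 hc2 hi1 hi2 =>
    (hmono c hc1 hc2 ⟨hi1, hi2⟩ ⟨by omega, le_rfl⟩ hi2).trans (hlast c hc1 hc2)
  have hlow : ∀ c i, 2 ≤ c → c ≤ r → 1 ≤ i → i ≤ K → (c - 2) * q + 2 ≤ T i c := by
    intro c i hc1 hc2 hi1 hi2
    have : T 1 c ≤ T i c := hmono c (by omega) hc2 ⟨le_rfl, by omega⟩ ⟨hi1, hi2⟩ hi1
    have := (hm (c - 1) (by omega) (by omega)).1
    have := hfirst c hc1 hc2
    omega
  have hcol u := card_filter_le_add_sum_card_filter_eq T u hK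
    (fun i c h1 h2 h3 h4 => (hentries i c h1 h2 h3 h4).1) hcount hup hlow hj1 (by omega)
  have hcol_l := hcol l (by omega) hl2
  have hcol_pred := hcol (l - 1) (by omega) (by omega)
  have hi_card : i ≤ #{x ∈ Icc 1 K | T x j ≤ (j - 1) * q + l} := by omega
  have hiK : i ≤ K := hi_card.trans ((card_filter_le _ _).trans (by simp))
  have hgt : (j - 1) * q + (l - 1) < T i j := by
    by_contra! h
    have := (hmono j hj1 (by omega)).le_card_filter_le (by omega) hiK h
    omega
  have := (hmono j hj1 (by omega)).apply_le_of_le_card_filter_le (by omega) hi_card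
  omega

/-- Lemma 3.6 of the paper: a technical interval lemma for balanced standard
tableaux supported on `X^{v_m}_{w_{r,n}}`. Here
`N t c = #{rows i : T(i,c) = t}`. -/
theorem interval_lemma
    (r q : ℕ) (hr : 0 < r) (hq : 0 < q) (n : ℕ) (hn : n = q * r + 1)
    (k : ℕ) (hk : 0 < k)
    (m : ℕ → ℕ) (hm : ∀ i : ℕ, 1 ≤ i → i ≤ r - 1 → 1 ≤ m i ∧ m i ≤ q)
    (T : ℕ → ℕ → ℕ)
    (hentries : ∀ i j : ℕ, 1 ≤ i → i ≤ k * n → 1 ≤ j → j ≤ r → 1 ≤ T i j ∧ T i j ≤ n)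
    (hrows : ∀ i j : ℕ, 1 ≤ i → i ≤ k * n → 1 ≤ j → j < r → T i j < T i (j + 1))
    (hcols : ∀ i j : ℕ, 1 ≤ i → i < k * n → 1 ≤ j → j ≤ r → T i j ≤ T (i + 1) j)
    (hcount : ∀ t : ℕ, 1 ≤ t → t ≤ n →
      (((Finset.Icc 1 (k * n)) ×ˢ (Finset.Icc 1 r)).filter
        (fun p => T p.1 p.2 = t)).card = r * k)
    (hlast : ∀ j : ℕ, 1 ≤ j → j ≤ r → T (k * n) j ≤ j * q + 1)
    (hfirst : ∀ j : ℕ, 2 ≤ j → j ≤ r → (j - 2) * q + m (j - 1) + 1 ≤ T 1 j)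
    (j : ℕ) (hj1 : 1 ≤ j) (hjr : j ≤ r - 1)
    (l : ℕ) (hl1 : 3 ≤ l) (hl2 : l ≤ q + 1)
    (n1 n2 : ℕ) (hn12 : n1 ≤ n2) (hn2 : n2 ≤ k * (r - j))
    (hN1 : n1 ≤ ∑ t ∈ Finset.Icc 2 (l - 1),
      ((Finset.Icc 1 (k * n)).filter (fun i => T i (j + 1) = (j - 1) * q + t)).card)
    (hN2 : (∑ t ∈ Finset.Icc 2 l,
      ((Finset.Icc 1 (k * n)).filter (fun i => T i (j + 1) = (j - 1) * q + t)).card) ≤ n2) :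
    ∀ i : ℕ, k * (r * (l - 1) + 1 - j) - n1 + 1 ≤ i → i ≤ k * (r * l + 1 - j) - n2 →
      T i j = (j - 1) * q + l :=
  interval_lemma_general r q n hn k m hm T hentries hcols hcount hlast hfirst j hj1 hjr l hl1 hl2 n1
    n2 hN1 hN2
end

section
/- Let $r,q\ge 1$, $n=qr+1$, and fix integers $1\le m_1,\dots,m_{r-1}\le q$. Let $\mathcal{A}$ be the set of $n\times r$ arrays $T$ with entries in $\{1,\dots,n\}$ such that rows are strictly increasing, columns are weakly increasing, every value appears exactly $r$ times, $T(n,j)\le jq+1$ for all $j$, and $T(1,j)\ge (j-2)q+m_{j-1}+1$ for $2\le j\le r$. Let $A_j$ ($1\le j\le r-1$) be the set of weakly increasing sequences $m_j+1\le t_{1,j}\le\cdots\le t_{r-j,j}\le q+1$. Then there is a bijection between $A_1\times A_2\times\cdots\times A_{r-1}$ and $\mathcal{A}$; in particular $|\mathcal{A}|=\prod_{j=1}^{r-1}\binom{q-m_j+r-j}{r-j}$. -/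
/-- The conditions defining the set `𝒜` of balanced standard tableaux of shape
`n × r` supported on `X^{v_m}_{w_{r,n}}` (tableaux encoded as functions
`ℕ → ℕ → ℕ`, `1`-indexed, vanishing outside the shape). -/
def TabCond (r q n : ℕ) (m : ℕ → ℕ) (T : ℕ → ℕ → ℕ) : Prop :=
  (∀ i j : ℕ, 1 ≤ i → i ≤ n → 1 ≤ j → j ≤ r → 1 ≤ T i j ∧ T i j ≤ n) ∧
  (∀ i j : ℕ, 1 ≤ i → i ≤ n → 1 ≤ j → j < r → T i j < T i (j + 1)) ∧
  (∀ i j : ℕ, 1 ≤ i → i < n → 1 ≤ j → j ≤ r → T i j ≤ T (i + 1) j) ∧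
  (∀ t : ℕ, 1 ≤ t → t ≤ n →
    (((Finset.Icc 1 n) ×ˢ (Finset.Icc 1 r)).filter (fun p => T p.1 p.2 = t)).card = r) ∧
  (∀ j : ℕ, 1 ≤ j → j ≤ r → T n j ≤ j * q + 1) ∧
  (∀ j : ℕ, 2 ≤ j → j ≤ r → (j - 2) * q + m (j - 1) + 1 ≤ T 1 j) ∧
  (∀ i j : ℕ, i = 0 ∨ n < i ∨ j = 0 ∨ r < j → T i j = 0)

/-- The conditions defining the set `A_j` of weakly increasing sequences
`m_j + 1 ≤ t_1 ≤ ⋯ ≤ t_{r-j} ≤ q + 1` (sequences encoded as functions `ℕ → ℕ`,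
`1`-indexed, vanishing outside the index range). -/
def SeqCond (r q : ℕ) (m : ℕ → ℕ) (j : ℕ) (f : ℕ → ℕ) : Prop :=
  (∀ i : ℕ, 1 ≤ i → i ≤ r - j → m j + 1 ≤ f i ∧ f i ≤ q + 1) ∧
  (∀ i : ℕ, 1 ≤ i → i < r - j → f i ≤ f (i + 1)) ∧
  (∀ i : ℕ, i = 0 ∨ r - j < i → f i = 0)

namespace TabAux

/-- number of entries of the `j`-th sequence that are `≤ s`; for `j = 0` we use the
convention of a constant sequence `1` of length `r`. -/
def cnt (r : ℕ) (F : ℕ → ℕ → ℕ) (j s : ℕ) : ℕ :=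
  if j = 0 then (if 1 ≤ s then r else 0)
  else ((Finset.Icc 1 (r - j)).filter (fun i => F j i ≤ s)).card

/-- cumulative multiplicity in band `j`. -/
def NN (r : ℕ) (F : ℕ → ℕ → ℕ) (j t : ℕ) : ℕ := (t - 1) * r - cnt r F j t

/-- `k`-th element (as offset in the band) of the sorted band-`j` multiset. -/
def gg (r q : ℕ) (F : ℕ → ℕ → ℕ) (j k : ℕ) : ℕ :=
  1 + ((Finset.Icc 1 (q + 1)).filter (fun t => NN r F j t < k)).card

/-- The tableau built from a family of sequences. -/
def Phi (r q : ℕ) (F : ℕ → ℕ → ℕ) : ℕ → ℕ → ℕ := fun i j =>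
  if 1 ≤ i ∧ i ≤ q * r + 1 ∧ 1 ≤ j ∧ j ≤ r then
    (if i ≤ r - j + 1 then (if j = 1 then 1 else (j - 2) * q + F (j - 1) i)
     else (j - 1) * q + gg r q F j (i - (r - j + 1)))
  else 0

/-- The family of sequences read off from a tableau. -/
def PsiF (r q : ℕ) (T : ℕ → ℕ → ℕ) : ℕ → ℕ → ℕ := fun j i =>
  if 1 ≤ j ∧ j ≤ r - 1 ∧ 1 ≤ i ∧ i ≤ r - j then T i (j + 1) - (j - 1) * q else 0

/-- Explicit formula for the number of entries `≤ v` in column `j`. -/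
def Ecol (r q : ℕ) (F : ℕ → ℕ → ℕ) (j v : ℕ) : ℕ :=
  if j * q + 1 ≤ v then q * r + 1
  else if (j - 1) * q + 1 ≤ v then (r - j + 1) + NN r F j (v - (j - 1) * q)
  else cnt r F (j - 1) (v - (j - 2) * q)

/-- column count of a tableau -/
def ccnt (n : ℕ) (T : ℕ → ℕ → ℕ) (j v : ℕ) : ℕ :=
  ((Finset.Icc 1 n).filter (fun i => T i j ≤ v)).card



lemma sum_classify (r a C X Y : ℕ) (G : ℕ → ℕ) (_ha : a ≤ r)
    (h1 : ∀ j, 1 ≤ j → j ≤ a → G j = C)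
    (h2 : a + 1 ≤ r → G (a + 1) = X) (h3 : a + 2 ≤ r → G (a + 2) = Y)
    (h4 : ∀ j, a + 3 ≤ j → j ≤ r → G j = 0) :
    ∑ j ∈ Finset.Icc 1 r, G j =
      a * C + (if a + 1 ≤ r then X else 0) + (if a + 2 ≤ r then Y else 0) := by
  have hpt : ∀ j ∈ Finset.Icc 1 r, G j =
      (if j ≤ a then C else 0) + ((if j = a + 1 then X else 0) +
        (if j = a + 2 then Y else 0)) := by
    intro j hj
    simp only [Finset.mem_Icc] at hj
    by_cases hja : j ≤ a
    · rw [h1 j hj.1 hja, if_pos hja, if_neg (by omega), if_neg (by omega)]; ring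
    · rw [if_neg hja]
      by_cases hj1 : j = a + 1
      · rw [if_pos hj1, if_neg (by omega), hj1, h2 (by omega)]; ring
      · by_cases hj2 : j = a + 2
        · rw [if_pos hj2, if_neg hj1, hj2, h3 (by omega)]; ring
        · rw [if_neg hj1, if_neg hj2, h4 j (by omega) hj.2]
  rw [Finset.sum_congr rfl hpt, Finset.sum_add_distrib, Finset.sum_add_distrib]
  have e1 : ∑ j ∈ Finset.Icc 1 r, (if j ≤ a then C else 0) = a * C := by
    rw [← Finset.sum_filter]
    have : (Finset.Icc 1 r).filter (fun j => j ≤ a) = Finset.Icc 1 a := by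
      ext x; simp only [Finset.mem_filter, Finset.mem_Icc]; omega
    rw [this, Finset.sum_const, Nat.card_Icc]
    simp [Nat.smul_one_eq_cast, mul_comm]
  have e2 : ∑ j ∈ Finset.Icc 1 r, (if j = a + 1 then X else 0) =
      (if a + 1 ≤ r then X else 0) := by
    rw [Finset.sum_ite_eq' (Finset.Icc 1 r) (a + 1) (fun _ => X)]
    simp only [Finset.mem_Icc]
    by_cases h : a + 1 ≤ r <;> simp [h]
  have e3 : ∑ j ∈ Finset.Icc 1 r, (if j = a + 2 then Y else 0) =
      (if a + 2 ≤ r then Y else 0) := by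
    rw [Finset.sum_ite_eq' (Finset.Icc 1 r) (a + 2) (fun _ => Y)]
    simp only [Finset.mem_Icc]
    by_cases h : a + 2 ≤ r <;> simp [h]
  rw [e1, e2, e3]; ring

/-- a down-closed subset of `Icc 1 n` of cardinality `c` is `Icc 1 c`. -/
lemma downClosed_char {n c : ℕ} (P : ℕ → Prop) [DecidablePred P]
    (hdc : ∀ i i', 1 ≤ i → i ≤ i' → i' ≤ n → P i' → P i)
    (hc : ((Finset.Icc 1 n).filter (fun i => P i)).card = c) :
    ∀ i, 1 ≤ i → i ≤ n → (P i ↔ i ≤ c) := by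
  intro i hi1 hin
  constructor
  · intro hP
    have hsub : Finset.Icc 1 i ⊆ (Finset.Icc 1 n).filter (fun i => P i) := by
      intro x hx
      simp only [Finset.mem_Icc] at hx
      simp only [Finset.mem_filter, Finset.mem_Icc]
      exact ⟨⟨hx.1, le_trans hx.2 hin⟩, hdc x i hx.1 hx.2 hin hP⟩
    have := Finset.card_le_card hsub
    rw [hc, Nat.card_Icc] at this; omega
  · intro hic
    by_contra hP
    have hsub : (Finset.Icc 1 n).filter (fun i => P i) ⊆ Finset.Icc 1 (i - 1) := by
      intro x hx
      simp only [Finset.mem_filter, Finset.mem_Icc] at hx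
      simp only [Finset.mem_Icc]
      refine ⟨hx.1.1, ?_⟩
      by_contra hxi
      exact hP (hdc i x hi1 (by omega) hx.1.2 hx.2)
    have := Finset.card_le_card hsub
    rw [hc, Nat.card_Icc] at this; omega

/-- a monotone sequence on `Icc 1 n` is determined by its counting function. -/
lemma mono_determined {n : ℕ} (a b : ℕ → ℕ)
    (ha : ∀ i i', 1 ≤ i → i ≤ i' → i' ≤ n → a i ≤ a i')
    (hb : ∀ i i', 1 ≤ i → i ≤ i' → i' ≤ n → b i ≤ b i')
    (hcount : ∀ v, ((Finset.Icc 1 n).filter (fun i => a i ≤ v)).card =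
      ((Finset.Icc 1 n).filter (fun i => b i ≤ v)).card) :
    ∀ i, 1 ≤ i → i ≤ n → a i = b i := by
  have key : ∀ (c : ℕ → ℕ), (∀ i i', 1 ≤ i → i ≤ i' → i' ≤ n → c i ≤ c i') →
      ∀ v i, 1 ≤ i → i ≤ n →
      (c i ≤ v ↔ i ≤ ((Finset.Icc 1 n).filter (fun i => c i ≤ v)).card) := by
    intro c hc v i hi1 hin
    exact downClosed_char (fun i => c i ≤ v)
      (fun x x' hx hxx' hx'n hP => le_trans (hc x x' hx hxx' hx'n) hP) rfl i hi1 hin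
  intro i hi1 hin
  have h1 : a i ≤ b i := by
    rw [key a ha (b i) i hi1 hin, hcount (b i), ← key b hb (b i) i hi1 hin]
  have h2 : b i ≤ a i := by
    rw [key b hb (a i) i hi1 hin, ← hcount (a i), ← key a ha (a i) i hi1 hin]
  omega

lemma cardShift (e K : ℕ) (Q : ℕ → Prop) [DecidablePred Q] :
    ((Finset.Ioc e (e + K)).filter (fun i => Q (i - e))).card =
      ((Finset.Icc 1 K).filter (fun k => Q k)).card := by
  apply Finset.card_bij' (fun i _ => i - e) (fun k _ => k + e)
  · intro i hi
    simp only [Finset.mem_filter, Finset.mem_Ioc] at hi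
    simp only [Finset.mem_filter, Finset.mem_Icc]
    exact ⟨⟨by omega, by omega⟩, hi.2⟩
  · intro k hk
    simp only [Finset.mem_filter, Finset.mem_Icc] at hk
    simp only [Finset.mem_filter, Finset.mem_Ioc]
    constructor
    · omega
    · have : k + e - e = k := by omega
      rw [this]; exact hk.2
  · intro i hi
    simp only [Finset.mem_filter, Finset.mem_Ioc] at hi
    omega
  · intro k _; omega

lemma cardProd (n r : ℕ) (P : ℕ → ℕ → Prop) [∀ i j, Decidable (P i j)] :
    (((Finset.Icc 1 n) ×ˢ (Finset.Icc 1 r)).filter (fun p => P p.1 p.2)).card =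
      ∑ j ∈ Finset.Icc 1 r, ((Finset.Icc 1 n).filter (fun i => P i j)).card := by
  rw [Finset.card_filter, Finset.sum_product]
  rw [Finset.sum_comm]
  exact Finset.sum_congr rfl (fun j _ => (Finset.card_filter _ _).symm)


section core

variable (r q : ℕ) (F : ℕ → ℕ → ℕ)
variable (hFb : ∀ j i, 1 ≤ j → j ≤ r - 1 → 1 ≤ i → i ≤ r - j → 2 ≤ F j i ∧ F j i ≤ q + 1)

lemma c_le (j s : ℕ) (hj : 1 ≤ j) : cnt r F j s ≤ r - j := by
  rw [cnt, if_neg (by omega)]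
  calc ((Finset.Icc 1 (r - j)).filter (fun i => F j i ≤ s)).card
      ≤ (Finset.Icc 1 (r - j)).card := Finset.card_filter_le _ _
    _ = r - j := by rw [Nat.card_Icc]; omega

lemma c_mono (j : ℕ) {s s' : ℕ} (h : s ≤ s') : cnt r F j s ≤ cnt r F j s' := by
  rw [cnt, cnt]
  by_cases hj : j = 0
  · rw [if_pos hj, if_pos hj]
    by_cases h1 : 1 ≤ s
    · rw [if_pos h1, if_pos (by omega)]
    · rw [if_neg h1]; omega
  · rw [if_neg hj, if_neg hj]
    apply Finset.card_le_card
    apply Finset.monotone_filter_right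
    intro i _ hi; exact le_trans hi h

include hFb in
lemma c_small (j s : ℕ) (hj : 1 ≤ j) (hs : s ≤ 1) : cnt r F j s = 0 := by
  rw [cnt, if_neg (by omega), Finset.card_eq_zero, Finset.filter_eq_empty_iff]
  intro i hi
  simp only [Finset.mem_Icc] at hi
  by_cases hjr : j ≤ r - 1
  · have := hFb j i hj hjr hi.1 hi.2; omega
  · omega

include hFb in
lemma c_full (j s : ℕ) (hj : 1 ≤ j) (hs : q + 1 ≤ s) : cnt r F j s = r - j := by
  rw [cnt, if_neg (by omega)]
  rw [Finset.filter_true_of_mem]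
  · rw [Nat.card_Icc]; omega
  intro i hi
  simp only [Finset.mem_Icc] at hi
  by_cases hjr : j ≤ r - 1
  · have := hFb j i hj hjr hi.1 hi.2; omega
  · omega

include hFb in
lemma NN_mono (j : ℕ) {t t' : ℕ} (hj : 1 ≤ j) (ht : 1 ≤ t) (h : t ≤ t') :
    NN r F j t ≤ NN r F j t' := by
  induction t', h using Nat.le_induction with
  | base => exact le_refl _
  | succ t' ht' ih =>
      refine le_trans ih ?_
      rw [NN, NN]
      have h1 : cnt r F j (t' + 1) ≤ r - j := c_le r F j _ hj
      have h2 : (t' - 1) * r = t' * r - r := by rw [Nat.sub_one_mul]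
      have h3 : (t' + 1 - 1) * r = t' * r := by norm_num
      have h4 : r ≤ t' * r := by
        calc r = 1 * r := (one_mul r).symm
        _ ≤ t' * r := Nat.mul_le_mul_right r (by omega)
      omega

lemma NN_one (j : ℕ) : NN r F j 1 = 0 := by simp [NN]

include hFb in
lemma NN_qadd1 (j : ℕ) (hj : 1 ≤ j) : NN r F j (q + 1) = q * r - (r - j) := by
  rw [NN, c_full r q F hFb j _ hj (le_refl _)]
  norm_num

include hFb in
lemma NN_le_K (j t : ℕ) (hj : 1 ≤ j) (ht : 1 ≤ t) (ht' : t ≤ q + 1) :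
    NN r F j t ≤ q * r - (r - j) := by
  rw [← NN_qadd1 r q F hFb j hj]
  exact NN_mono r q F hFb j hj ht ht'

include hFb in
lemma gg_le_iff (j t k : ℕ) (hj : 1 ≤ j) (ht : 1 ≤ t) (ht' : t ≤ q + 1) (hk : 1 ≤ k) :
    gg r q F j k ≤ t ↔ k ≤ NN r F j t := by
  rw [gg]
  constructor
  · intro h
    by_contra hc
    push_neg at hc
    have hsub : Finset.Icc 1 t ⊆ (Finset.Icc 1 (q + 1)).filter (fun s => NN r F j s < k) := by
      intro s hs
      simp only [Finset.mem_Icc] at hs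
      simp only [Finset.mem_filter, Finset.mem_Icc]
      refine ⟨⟨hs.1, by omega⟩, ?_⟩
      calc NN r F j s ≤ NN r F j t := NN_mono r q F hFb j hj hs.1 hs.2
      _ < k := hc
    have := Finset.card_le_card hsub
    rw [Nat.card_Icc] at this
    omega
  · intro h
    have hsub : (Finset.Icc 1 (q + 1)).filter (fun s => NN r F j s < k) ⊆
        Finset.Icc 1 (t - 1) := by
      intro s hs
      simp only [Finset.mem_filter, Finset.mem_Icc] at hs
      simp only [Finset.mem_Icc]
      refine ⟨hs.1.1, ?_⟩
      by_contra hst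
      have : NN r F j t ≤ NN r F j s := NN_mono r q F hFb j hj ht (by omega)
      omega
    have := Finset.card_le_card hsub
    rw [Nat.card_Icc] at this
    omega

lemma gg_ge2 (j k : ℕ) (hk : 1 ≤ k) : 2 ≤ gg r q F j k := by
  rw [gg]
  have h1 : (1 : ℕ) ∈ (Finset.Icc 1 (q + 1)).filter (fun t => NN r F j t < k) := by
    simp only [Finset.mem_filter, Finset.mem_Icc, NN_one]
    omega
  have := Finset.card_pos.mpr ⟨1, h1⟩
  omega

include hFb in
lemma gg_le (j k : ℕ) (hj : 1 ≤ j) (hk : k ≤ q * r - (r - j)) : gg r q F j k ≤ q + 1 := by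
  rw [gg]
  have hsub : (Finset.Icc 1 (q + 1)).filter (fun t => NN r F j t < k) ⊆ Finset.Icc 1 q := by
    intro s hs
    simp only [Finset.mem_filter, Finset.mem_Icc] at hs
    simp only [Finset.mem_Icc]
    refine ⟨hs.1.1, ?_⟩
    by_contra hsq
    have hseq : s = q + 1 := by omega
    rw [hseq, NN_qadd1 r q F hFb j hj] at hs
    omega
  have := Finset.card_le_card hsub
  rw [Nat.card_Icc] at this
  omega

lemma gg_mono (j : ℕ) {k k' : ℕ} (h : k ≤ k') : gg r q F j k ≤ gg r q F j k' := by
  rw [gg, gg]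
  have : (Finset.Icc 1 (q + 1)).filter (fun t => NN r F j t < k) ⊆
      (Finset.Icc 1 (q + 1)).filter (fun t => NN r F j t < k') :=
    Finset.monotone_filter_right _ (fun t ht => by omega)
  have := Finset.card_le_card this
  omega

include hFb in
lemma gg_count (j t : ℕ) (hj : 1 ≤ j) (ht : 1 ≤ t) (ht' : t ≤ q + 1) :
    ((Finset.Icc 1 (q * r - (r - j))).filter (fun k => gg r q F j k ≤ t)).card
      = NN r F j t := by
  have heq : (Finset.Icc 1 (q * r - (r - j))).filter (fun k => gg r q F j k ≤ t)
      = Finset.Icc 1 (NN r F j t) := by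
    ext k
    simp only [Finset.mem_filter, Finset.mem_Icc]
    constructor
    · rintro ⟨⟨hk1, _⟩, hk2⟩
      exact ⟨hk1, (gg_le_iff r q F hFb j t k hj ht ht' hk1).mp hk2⟩
    · rintro ⟨hk1, hk2⟩
      refine ⟨⟨hk1, le_trans hk2 (NN_le_K r q F hFb j t hj ht ht')⟩, ?_⟩
      exact (gg_le_iff r q F hFb j t k hj ht ht' hk1).mpr hk2
  rw [heq, Nat.card_Icc]
  omega


include hFb in
lemma Phi_ccnt (hq : 1 ≤ q) (j v : ℕ) (hj : 1 ≤ j) (hjr : j ≤ r) :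
    ((Finset.Icc 1 (q * r + 1)).filter (fun i => Phi r q F i j ≤ v)).card
      = Ecol r q F j v := by
  have hrq : r ≤ q * r := by
    calc r = 1 * r := (one_mul r).symm
    _ ≤ q * r := Nat.mul_le_mul_right r hq
  set n := q * r + 1 with hn
  set e := r - j + 1 with he
  set K := q * r - (r - j) with hK
  have heK : n = e + K := by omega
  have hsplit : Finset.Icc 1 n = Finset.Icc 1 e ∪ Finset.Ioc e n := by
    ext x
    simp only [Finset.mem_union, Finset.mem_Icc, Finset.mem_Ioc]
    omega
  have hdisj : Disjoint
      ((Finset.Icc 1 e).filter (fun i => Phi r q F i j ≤ v))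
      ((Finset.Ioc e n).filter (fun i => Phi r q F i j ≤ v)) := by
    rw [Finset.disjoint_left]
    intro x hx hy
    simp only [Finset.mem_filter, Finset.mem_Icc, Finset.mem_Ioc] at hx hy
    omega
  rw [hsplit, Finset.filter_union, Finset.card_union_of_disjoint hdisj]
  -- rewrite top filter
  have htop : (Finset.Icc 1 e).filter (fun i => Phi r q F i j ≤ v) =
      (Finset.Icc 1 e).filter
        (fun i => (if j = 1 then 1 else (j - 2) * q + F (j - 1) i) ≤ v) := by
    apply Finset.filter_congr
    intro i hi
    simp only [Finset.mem_Icc] at hi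
    rw [Phi, if_pos (by omega), if_pos (by omega)]
  -- rewrite bottom filter
  have hbot : (Finset.Ioc e n).filter (fun i => Phi r q F i j ≤ v) =
      (Finset.Ioc e n).filter (fun i => (j - 1) * q + gg r q F j (i - e) ≤ v) := by
    apply Finset.filter_congr
    intro i hi
    simp only [Finset.mem_Ioc] at hi
    rw [Phi, if_pos (by omega), if_neg (by omega)]
  rw [htop, hbot]
  have hbotshift : ((Finset.Ioc e n).filter
      (fun i => (j - 1) * q + gg r q F j (i - e) ≤ v)).card =
      ((Finset.Icc 1 K).filter (fun k => (j - 1) * q + gg r q F j k ≤ v)).card := by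
    rw [heK]
    exact cardShift e K (fun k => (j - 1) * q + gg r q F j k ≤ v)
  rw [hbotshift]
  -- bounds on F used repeatedly
  have hFtop : ∀ i, 1 ≤ i → i ≤ e → (if j = 1 then 1 else (j - 2) * q + F (j - 1) i)
      ≤ (j - 1) * q + 1 := by
    intro i hi1 hie
    by_cases hj1 : j = 1
    · rw [if_pos hj1]; omega
    · rw [if_neg hj1]
      have hb := hFb (j - 1) i (by omega) (by omega) hi1 (by omega)
      have : (j - 2) * q + (q + 1) = (j - 1) * q + 1 := by
        have : j - 1 = (j - 2) + 1 := by omega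
        rw [this]; ring
      omega
  by_cases hc1 : j * q + 1 ≤ v
  · -- full column
    rw [Ecol, if_pos hc1]
    have h1 : (Finset.Icc 1 e).filter
        (fun i => (if j = 1 then 1 else (j - 2) * q + F (j - 1) i) ≤ v) =
        Finset.Icc 1 e := by
      apply Finset.filter_true_of_mem
      intro i hi
      simp only [Finset.mem_Icc] at hi
      have := hFtop i hi.1 hi.2
      have : (j - 1) * q + 1 ≤ j * q + 1 := by
        have : (j - 1) * q ≤ j * q := Nat.mul_le_mul_right q (by omega)
        omega
      omega
    have h2 : (Finset.Icc 1 K).filter (fun k => (j - 1) * q + gg r q F j k ≤ v) =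
        Finset.Icc 1 K := by
      apply Finset.filter_true_of_mem
      intro k hk
      simp only [Finset.mem_Icc] at hk
      have hg := gg_le r q F hFb j k hj hk.2
      have : (j - 1) * q + (q + 1) = j * q + 1 := by
        have hj' : j = (j - 1) + 1 := by omega
        nth_rewrite 2 [hj']
        ring
      omega
    rw [h1, h2, Nat.card_Icc, Nat.card_Icc]
    omega
  · by_cases hc2 : (j - 1) * q + 1 ≤ v
    · -- middle band
      rw [Ecol, if_neg hc1, if_pos hc2]
      set t := v - (j - 1) * q with htdef
      have ht1 : 1 ≤ t := by omega
      have htq : t ≤ q := by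
        have : v < j * q + 1 := by omega
        have hjq : j * q = (j - 1) * q + q := by
          have hj' : j = (j - 1) + 1 := by omega
          nth_rewrite 1 [hj']
          ring
        omega
      have h1 : (Finset.Icc 1 e).filter
          (fun i => (if j = 1 then 1 else (j - 2) * q + F (j - 1) i) ≤ v) =
          Finset.Icc 1 e := by
        apply Finset.filter_true_of_mem
        intro i hi
        simp only [Finset.mem_Icc] at hi
        have := hFtop i hi.1 hi.2
        omega
      have h2 : (Finset.Icc 1 K).filter (fun k => (j - 1) * q + gg r q F j k ≤ v) =
          (Finset.Icc 1 K).filter (fun k => gg r q F j k ≤ t) := by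
        apply Finset.filter_congr
        intro k _
        constructor
        · intro h; omega
        · intro h; omega
      rw [h1, h2, gg_count r q F hFb j t hj ht1 (by omega), Nat.card_Icc]
      omega
    · -- below the band
      rw [Ecol, if_neg hc1, if_neg hc2]
      have h2 : (Finset.Icc 1 K).filter (fun k => (j - 1) * q + gg r q F j k ≤ v) =
          ∅ := by
        rw [Finset.filter_eq_empty_iff]
        intro k hk
        simp only [Finset.mem_Icc] at hk
        have := gg_ge2 r q F j k hk.1
        omega
      rw [h2, Finset.card_empty]
      by_cases hj1 : j = 1
      · subst hj1
        have hv0 : v = 0 := by omega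
        subst hv0
        have h1 : (Finset.Icc 1 e).filter
            (fun i => (if 1 = 1 then 1 else (1 - 2) * q + F (1 - 1) i) ≤ 0) = ∅ := by
          rw [Finset.filter_eq_empty_iff]
          intro i _
          simp
        rw [h1, Finset.card_empty, cnt]
        simp
      · have h1 : (Finset.Icc 1 e).filter
            (fun i => (if j = 1 then 1 else (j - 2) * q + F (j - 1) i) ≤ v) =
            (Finset.Icc 1 (r - (j - 1))).filter
              (fun i => F (j - 1) i ≤ v - (j - 2) * q) := by
          have hee : e = r - (j - 1) := by omega
          rw [← hee]
          apply Finset.filter_congr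
          intro i hi
          simp only [Finset.mem_Icc] at hi
          rw [if_neg hj1]
          have hb := hFb (j - 1) i (by omega) (by omega) hi.1 (by omega)
          constructor
          · intro h; omega
          · intro h; omega
        rw [h1, cnt, if_neg (by omega)]
        omega

omit hFb in
lemma Phi_zero (i j : ℕ) (h : i = 0 ∨ q * r + 1 < i ∨ j = 0 ∨ r < j) :
    Phi r q F i j = 0 := by
  rw [Phi, if_neg (by omega)]

include hFb in
lemma Phi_top_le (i j : ℕ) (hi1 : 1 ≤ i) (hin : i ≤ q * r + 1) (hj : 1 ≤ j)
    (hjr : j ≤ r) (hie : i ≤ r - j + 1) : Phi r q F i j ≤ (j - 1) * q + 1 := by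
  rw [Phi, if_pos (by omega), if_pos hie]
  by_cases hj1 : j = 1
  · rw [if_pos hj1]; omega
  · rw [if_neg hj1]
    have hb := hFb (j - 1) i (by omega) (by omega) hi1 (by omega)
    have : (j - 2) * q + (q + 1) = (j - 1) * q + 1 := by
      have : j - 1 = (j - 2) + 1 := by omega
      rw [this]; ring
    omega

omit hFb in
lemma Phi_top_ge (i j : ℕ) (hi1 : 1 ≤ i) (hin : i ≤ q * r + 1) (hj : 1 ≤ j)
    (hjr : j ≤ r) (hie : i ≤ r - j + 1)
    (hFge : ∀ j' i', 1 ≤ j' → j' ≤ r - 1 → 1 ≤ i' → i' ≤ r - j' → 2 ≤ F j' i') :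
    1 ≤ Phi r q F i j := by
  rw [Phi, if_pos (by omega), if_pos hie]
  by_cases hj1 : j = 1
  · rw [if_pos hj1]
  · rw [if_neg hj1]
    have := hFge (j - 1) i (by omega) (by omega) hi1 (by omega)
    omega

omit hFb in
lemma Phi_bot_ge (i j : ℕ) (hi1 : 1 ≤ i) (hin : i ≤ q * r + 1) (hj : 1 ≤ j)
    (hjr : j ≤ r) (hie : r - j + 1 < i) : (j - 1) * q + 2 ≤ Phi r q F i j := by
  rw [Phi, if_pos (by omega), if_neg (by omega)]
  have := gg_ge2 r q F j (i - (r - j + 1)) (by omega)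
  omega

include hFb in
lemma Phi_bot_le (hq : 1 ≤ q) (i j : ℕ) (hi1 : 1 ≤ i) (hin : i ≤ q * r + 1) (hj : 1 ≤ j)
    (hjr : j ≤ r) (hie : r - j + 1 < i) : Phi r q F i j ≤ j * q + 1 := by
  rw [Phi, if_pos (by omega), if_neg (by omega)]
  have hrq : r ≤ q * r := by
    calc r = 1 * r := (one_mul r).symm
    _ ≤ q * r := Nat.mul_le_mul_right r (by omega)
  have := gg_le r q F hFb j (i - (r - j + 1)) hj (by omega)
  have : (j - 1) * q + (q + 1) = j * q + 1 := by
    have hj' : j = (j - 1) + 1 := by omega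
    nth_rewrite 2 [hj']
    ring
  omega

include hFb in
lemma Phi_le_band (hq : 1 ≤ q) (i j : ℕ) (hi1 : 1 ≤ i) (hin : i ≤ q * r + 1) (hj : 1 ≤ j)
    (hjr : j ≤ r) : Phi r q F i j ≤ j * q + 1 := by
  by_cases hie : i ≤ r - j + 1
  · have := Phi_top_le r q F hFb i j hi1 hin hj hjr hie
    have : (j - 1) * q ≤ j * q := Nat.mul_le_mul_right q (by omega)
    omega
  · exact Phi_bot_le r q F hFb hq i j hi1 hin hj hjr (by omega)

include hFb in
lemma Ecol_sum (hr : 1 ≤ r) (hq : 1 ≤ q) (v : ℕ) (hv : v ≤ q * r + 1) :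
    ∑ j ∈ Finset.Icc 1 r, Ecol r q F j v = r * v := by
  have hrq : r ≤ q * r := by
    calc r = 1 * r := (one_mul r).symm
    _ ≤ q * r := Nat.mul_le_mul_right r (by omega)
  by_cases hv0 : v = 0
  · subst hv0
    rw [Finset.sum_eq_zero, mul_zero]
    intro j hj
    simp only [Finset.mem_Icc] at hj
    rw [Ecol, if_neg (by omega), if_neg (by omega)]
    by_cases hj1 : j = 1
    · subst hj1; rw [cnt]; simp
    · rw [cnt, if_neg (by omega), Finset.card_eq_zero, Finset.filter_eq_empty_iff]
      intro i hi
      simp only [Finset.mem_Icc] at hi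
      by_cases hjr' : j - 1 ≤ r - 1
      · have := hFb (j - 1) i (by omega) hjr' hi.1 hi.2
        omega
      · omega
  · by_cases hvn : v = q * r + 1
    · have hall : ∀ j ∈ Finset.Icc 1 r, Ecol r q F j v = q * r + 1 := by
        intro j hj
        simp only [Finset.mem_Icc] at hj
        rw [Ecol, if_pos]
        have : j * q ≤ r * q := Nat.mul_le_mul_right q hj.2
        have : r * q = q * r := mul_comm r q
        omega
      rw [Finset.sum_congr rfl hall, Finset.sum_const, Nat.card_Icc]
      subst hvn
      simp [mul_comm]
    · -- 1 ≤ v ≤ q*r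
      obtain ⟨j0, t, hveq, ht1, htq, hj01, hj0r⟩ :
          ∃ j0 t, v = (j0 - 1) * q + t ∧ 1 ≤ t ∧ t ≤ q ∧ 1 ≤ j0 ∧ j0 ≤ r := by
        have hv1 : 1 ≤ v := by omega
        have hvq : v ≤ q * r := by omega
        clear hv0 hvn hv
        induction v, hv1 using Nat.le_induction with
        | base => exact ⟨1, 1, by simp, le_refl 1, hq, le_refl 1, hr⟩
        | succ v hv ih =>
            obtain ⟨j0, t, h1, h2, h3, h4, h5⟩ := ih (by omega)
            by_cases htc : t < q
            · exact ⟨j0, t + 1, by omega, by omega, by omega, h4, h5⟩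
            · refine ⟨j0 + 1, 1, ?_, le_refl 1, hq, by omega, ?_⟩
              · have : (j0 + 1 - 1) * q = (j0 - 1) * q + q := by
                  have hj' : j0 + 1 - 1 = (j0 - 1) + 1 := by omega
                  rw [hj']; ring
                omega
              · by_contra hc
                have hj0r' : j0 = r := by omega
                rw [hj0r'] at h1
                have hxx : (r - 1) * q + q = r * q := by
                  have hj' : r = (r - 1) + 1 := by omega
                  nth_rewrite 2 [hj']; ring
                have hcm : q * r = r * q := mul_comm q r
                omega
      have key := sum_classify r (j0 - 1) (q * r + 1)
        ((r - j0 + 1) + NN r F j0 t) (cnt r F j0 t) (fun j => Ecol r q F j v)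
        (by omega) ?_ ?_ ?_ ?_
      · rw [key]
        have hif1 : (if j0 - 1 + 1 ≤ r then (r - j0 + 1) + NN r F j0 t else 0)
            = (r - j0 + 1) + NN r F j0 t := by rw [if_pos (by omega)]
        have hif2 : (if j0 - 1 + 2 ≤ r then cnt r F j0 t else 0) = cnt r F j0 t := by
          by_cases h : j0 - 1 + 2 ≤ r
          · rw [if_pos h]
          · rw [if_neg h]
            have hj0r' : j0 = r := by omega
            have := c_le r F j0 t hj01
            omega
        rw [hif1, hif2]
        have hcle : cnt r F j0 t ≤ r - j0 := c_le r F j0 t hj01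
        have hgoal : (j0 - 1) * (q * r + 1) = (j0 - 1) * q * r + (j0 - 1) := by ring
        by_cases ht2 : t = 1
        · have hc0 : cnt r F j0 t = 0 := by
            rw [ht2]; exact c_small r q F hFb j0 1 hj01 (le_refl 1)
          have hNN0 : NN r F j0 t = 0 := by
            rw [NN, hc0, ht2]; simp
          have hrv : r * v = (j0 - 1) * q * r + r := by
            rw [hveq, ht2]; ring
          rw [hNN0, hc0]
          omega
        · obtain ⟨u, hu⟩ : ∃ u, t = u + 1 := ⟨t - 1, by omega⟩
          have hu1 : 1 ≤ u := by omega
          have hNNu : NN r F j0 t = u * r - cnt r F j0 t := by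
            rw [NN, hu]; simp
          have hrv : r * v = (j0 - 1) * q * r + u * r + r := by
            rw [hveq, hu]; ring
          have hur : r ≤ u * r := by
            calc r = 1 * r := (one_mul r).symm
            _ ≤ u * r := Nat.mul_le_mul_right r hu1
          rw [hNNu]
          omega
      · intro j hjge hjle
        show Ecol r q F j v = q * r + 1
        rw [Ecol, if_pos]
        have : j * q ≤ (j0 - 1) * q := Nat.mul_le_mul_right q (by omega)
        omega
      · intro _
        have hjj : j0 - 1 + 1 = j0 := by omega
        show Ecol r q F (j0 - 1 + 1) v = (r - j0 + 1) + NN r F j0 t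
        rw [hjj, Ecol, if_neg, if_pos]
        · rw [hveq]
          simp only [Nat.add_sub_cancel_left]
        · omega
        · have : j0 * q = (j0 - 1) * q + q := by
            have hj' : j0 = (j0 - 1) + 1 := by omega
            nth_rewrite 1 [hj']
            ring
          omega
      · intro hjle
        have hjj : j0 - 1 + 2 = j0 + 1 := by omega
        show Ecol r q F (j0 - 1 + 2) v = cnt r F j0 t
        have hqa : (j0 + 1 - 1) * q = j0 * q := by norm_num
        have hqb : (j0 + 1) * q = j0 * q + q := by ring
        have hqc : j0 * q = (j0 - 1) * q + q := by
          have hj' : j0 = (j0 - 1) + 1 := by omega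
          nth_rewrite 1 [hj']
          ring
        rw [hjj, Ecol, if_neg, if_neg]
        · have h1 : j0 + 1 - 1 = j0 := by omega
          have h2 : j0 + 1 - 2 = j0 - 1 := by omega
          rw [h1, h2, hveq]
          simp only [Nat.add_sub_cancel_left]
        · omega
        · omega
      · intro j hjge hjle
        show Ecol r q F j v = 0
        rw [Ecol, if_neg, if_neg]
        · have harg : v - (j - 2) * q = 0 := by
            have : j0 * q ≤ (j - 2) * q := Nat.mul_le_mul_right q (by omega)
            have : j0 * q = (j0 - 1) * q + q := by
              have hj' : j0 = (j0 - 1) + 1 := by omega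
              nth_rewrite 1 [hj']
              ring
            omega
          rw [harg]
          exact c_small r q F hFb (j - 1) 0 (by omega) (by omega)
        · have : j0 * q ≤ (j - 1) * q := Nat.mul_le_mul_right q (by omega)
          have : j0 * q = (j0 - 1) * q + q := by
            have hj' : j0 = (j0 - 1) + 1 := by omega
            nth_rewrite 1 [hj']
            ring
          omega
        · have : j0 * q ≤ j * q := Nat.mul_le_mul_right q (by omega)
          have : j0 * q = (j0 - 1) * q + q := by
            have hj' : j0 = (j0 - 1) + 1 := by omega
            nth_rewrite 1 [hj']
            ring
          omega

include hFb in
lemma Phi_TabCond (hr : 1 ≤ r) (hq : 1 ≤ q)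
    (hFm : ∀ j i, 1 ≤ j → j ≤ r - 1 → 1 ≤ i → i ≤ r - j → m j + 1 ≤ F j i)
    (hFmono : ∀ j i, 1 ≤ j → j ≤ r - 1 → 1 ≤ i → i < r - j → F j i ≤ F j (i + 1)) :
    TabCond r q (q * r + 1) m (Phi r q F) := by
  have hrq : r ≤ q * r := by
    calc r = 1 * r := (one_mul r).symm
    _ ≤ q * r := Nat.mul_le_mul_right r hq
  have hFge : ∀ j' i', 1 ≤ j' → j' ≤ r - 1 → 1 ≤ i' → i' ≤ r - j' → 2 ≤ F j' i' :=
    fun j' i' a b c d => (hFb j' i' a b c d).1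
  refine ⟨?_, ?_, ?_, ?_, ?_, ?_, ?_⟩
  · -- range
    intro i j hi1 hin hj1 hjr
    constructor
    · by_cases hie : i ≤ r - j + 1
      · exact Phi_top_ge r q F i j hi1 hin hj1 hjr hie hFge
      · have := Phi_bot_ge r q F i j hi1 hin hj1 hjr (by omega)
        omega
    · have := Phi_le_band r q F hFb hq i j hi1 hin hj1 hjr
      have : j * q ≤ r * q := Nat.mul_le_mul_right q hjr
      have : r * q = q * r := mul_comm r q
      omega
  · -- rows strictly increasing
    intro i j hi1 hin hj1 hjr
    by_cases hib : i ≤ r - j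
    · have hL := Phi_top_le r q F hFb i j hi1 hin hj1 (by omega) (by omega)
      have hR : (j - 1) * q + 2 ≤ Phi r q F i (j + 1) := by
        rw [Phi, if_pos (by omega), if_pos (by omega), if_neg (by omega)]
        have e1 : j + 1 - 2 = j - 1 := by omega
        have e2 : j + 1 - 1 = j := by omega
        rw [e1, e2]
        have := hFge j i hj1 (by omega) hi1 hib
        omega
      omega
    · have hL := Phi_le_band r q F hFb hq i j hi1 hin hj1 (by omega)
      have hR := Phi_bot_ge r q F i (j + 1) hi1 hin (by omega) (by omega) (by omega)
      have e1 : (j + 1 - 1) * q = j * q := by norm_num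
      omega
  · -- columns weakly increasing
    intro i j hi1 hin hj1 hjr
    by_cases h1 : i + 1 ≤ r - j + 1
    · have e1 : Phi r q F i j = if j = 1 then 1 else (j - 2) * q + F (j - 1) i := by
        rw [Phi, if_pos (by omega)]
        exact if_pos (by omega)
      have e2 : Phi r q F (i + 1) j =
          if j = 1 then 1 else (j - 2) * q + F (j - 1) (i + 1) := by
        rw [Phi, if_pos (by omega)]
        exact if_pos h1
      rw [e1, e2]
      by_cases hj' : j = 1
      · rw [if_pos hj', if_pos hj']
      · rw [if_neg hj', if_neg hj']
        have := hFmono (j - 1) i (by omega) (by omega) hi1 (by omega)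
        omega
    · by_cases h2 : i ≤ r - j + 1
      · have hL := Phi_top_le r q F hFb i j hi1 (by omega) hj1 hjr h2
        have hR := Phi_bot_ge r q F (i + 1) j (by omega) (by omega) hj1 hjr (by omega)
        omega
      · have e1 : Phi r q F i j = (j - 1) * q + gg r q F j (i - (r - j + 1)) := by
          rw [Phi, if_pos (by omega)]
          exact if_neg (by omega)
        have e2 : Phi r q F (i + 1) j =
            (j - 1) * q + gg r q F j (i + 1 - (r - j + 1)) := by
          rw [Phi, if_pos (by omega)]
          exact if_neg (by omega)
        rw [e1, e2]
        have := gg_mono r q F j (show i - (r - j + 1) ≤ i + 1 - (r - j + 1) by omega)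
        omega
  · -- counts
    intro t ht1 htn
    have hgrid : ∀ v, v ≤ q * r + 1 →
        (((Finset.Icc 1 (q * r + 1)) ×ˢ (Finset.Icc 1 r)).filter
          (fun p => Phi r q F p.1 p.2 ≤ v)).card = r * v := by
      intro v hv
      rw [cardProd (q * r + 1) r (fun a b => Phi r q F a b ≤ v)]
      rw [Finset.sum_congr rfl (fun j hj => by
        simp only [Finset.mem_Icc] at hj
        exact Phi_ccnt r q F hFb hq j v hj.1 hj.2)]
      exact Ecol_sum r q F hFb hr hq v hv
    have hsplit : ((Finset.Icc 1 (q * r + 1)) ×ˢ (Finset.Icc 1 r)).filter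
        (fun p => Phi r q F p.1 p.2 ≤ t) =
        (((Finset.Icc 1 (q * r + 1)) ×ˢ (Finset.Icc 1 r)).filter
          (fun p => Phi r q F p.1 p.2 ≤ t - 1)) ∪
        (((Finset.Icc 1 (q * r + 1)) ×ˢ (Finset.Icc 1 r)).filter
          (fun p => Phi r q F p.1 p.2 = t)) := by
      rw [← Finset.filter_or]
      apply Finset.filter_congr
      intro p _
      constructor
      · intro h; omega
      · intro h; omega
    have hdisj : Disjoint
        (((Finset.Icc 1 (q * r + 1)) ×ˢ (Finset.Icc 1 r)).filter
          (fun p => Phi r q F p.1 p.2 ≤ t - 1))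
        (((Finset.Icc 1 (q * r + 1)) ×ˢ (Finset.Icc 1 r)).filter
          (fun p => Phi r q F p.1 p.2 = t)) := by
      rw [Finset.disjoint_left]
      intro p hp hp'
      simp only [Finset.mem_filter] at hp hp'
      omega
    have h1 := hgrid t htn
    have h2 := hgrid (t - 1) (by omega)
    rw [hsplit, Finset.card_union_of_disjoint hdisj, h2] at h1
    have h3 : r * t = r * (t - 1) + r := by
      have he : t = t - 1 + 1 := by omega
      nth_rewrite 1 [he]
      ring
    omega
  · -- last row
    intro j hj1 hjr
    exact Phi_bot_le r q F hFb hq (q * r + 1) j (by omega) (le_refl _) hj1 hjr (by omega)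
  · -- first row
    intro j hj2 hjr
    rw [Phi, if_pos (by omega), if_pos (by omega), if_neg (by omega)]
    have := hFm (j - 1) 1 (by omega) (by omega) (le_refl 1) (by omega)
    omega
  · intro i j h
    exact Phi_zero r q F i j h

section rigid
variable (r q : ℕ) (m : ℕ → ℕ) (T : ℕ → ℕ → ℕ)
variable (hr : 1 ≤ r) (hq : 1 ≤ q)
variable (hm : ∀ i : ℕ, 1 ≤ i → i ≤ r - 1 → 1 ≤ m i ∧ m i ≤ q)
variable (hT : TabCond r q (q * r + 1) m T)

include hT in
lemma colMono (i i' j : ℕ) (hi : 1 ≤ i) (hii : i ≤ i') (hi' : i' ≤ q * r + 1)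
    (hj : 1 ≤ j) (hjr : j ≤ r) : T i j ≤ T i' j := by
  induction i', hii using Nat.le_induction with
  | base => exact le_refl _
  | succ i' hii ih => exact le_trans (ih (by omega)) (hT.2.2.1 i' j (by omega) (by omega) hj hjr)

include hT in
lemma colBound (i j : ℕ) (hi : 1 ≤ i) (hi' : i ≤ q * r + 1) (hj : 1 ≤ j) (hjr : j ≤ r) :
    T i j ≤ j * q + 1 :=
  le_trans (colMono r q m T hT i (q * r + 1) j hi hi' (le_refl _) hj hjr)
    (hT.2.2.2.2.1 j hj hjr)

include hT in
lemma colLow (i j : ℕ) (hi : 1 ≤ i) (hi' : i ≤ q * r + 1) (hj : 2 ≤ j) (hjr : j ≤ r) :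
    (j - 2) * q + m (j - 1) + 1 ≤ T i j :=
  le_trans (hT.2.2.2.2.2.1 j hj hjr)
    (colMono r q m T hT 1 i j (le_refl 1) hi hi' (by omega) hjr)

include hT in
lemma gridLe (v : ℕ) (hv : v ≤ q * r + 1) :
    (((Finset.Icc 1 (q * r + 1)) ×ˢ (Finset.Icc 1 r)).filter
      (fun p => T p.1 p.2 ≤ v)).card = r * v := by
  induction v with
  | zero =>
      rw [mul_zero, Finset.card_eq_zero, Finset.filter_eq_empty_iff]
      intro p hp
      simp only [Finset.mem_product, Finset.mem_Icc] at hp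
      have := (hT.1 p.1 p.2 hp.1.1 hp.1.2 hp.2.1 hp.2.2).1
      omega
  | succ v ih =>
      have hsplit : ((Finset.Icc 1 (q * r + 1)) ×ˢ (Finset.Icc 1 r)).filter
          (fun p => T p.1 p.2 ≤ v + 1) =
          (((Finset.Icc 1 (q * r + 1)) ×ˢ (Finset.Icc 1 r)).filter
            (fun p => T p.1 p.2 ≤ v)) ∪
          (((Finset.Icc 1 (q * r + 1)) ×ˢ (Finset.Icc 1 r)).filter
            (fun p => T p.1 p.2 = v + 1)) := by
        rw [← Finset.filter_or]
        apply Finset.filter_congr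
        intro p _
        constructor
        · intro h; omega
        · intro h; omega
      have hdisj : Disjoint
          (((Finset.Icc 1 (q * r + 1)) ×ˢ (Finset.Icc 1 r)).filter
            (fun p => T p.1 p.2 ≤ v))
          (((Finset.Icc 1 (q * r + 1)) ×ˢ (Finset.Icc 1 r)).filter
            (fun p => T p.1 p.2 = v + 1)) := by
        rw [Finset.disjoint_left]
        intro p hp hp'
        simp only [Finset.mem_filter] at hp hp'
        omega
      rw [hsplit, Finset.card_union_of_disjoint hdisj, ih (by omega),
        hT.2.2.2.1 (v + 1) (by omega) hv]
      ring

include hT in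
lemma ccnt_full (j v : ℕ) (hj : 1 ≤ j) (hjr : j ≤ r) (hv : j * q + 1 ≤ v) :
    ccnt (q * r + 1) T j v = q * r + 1 := by
  rw [ccnt, Finset.filter_true_of_mem, Nat.card_Icc]
  · omega
  · intro i hi
    simp only [Finset.mem_Icc] at hi
    have := colBound r q m T hT i j hi.1 hi.2 hj hjr
    omega

include hm hT in
lemma ccnt_zero (j v : ℕ) (hj : 2 ≤ j) (hjr : j ≤ r) (hv : v ≤ (j - 2) * q + 1) :
    ccnt (q * r + 1) T j v = 0 := by
  rw [ccnt, Finset.card_eq_zero, Finset.filter_eq_empty_iff]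
  intro i hi
  simp only [Finset.mem_Icc] at hi
  have h1 := colLow r q m T hT i j hi.1 hi.2 hj hjr
  have h2 := (hm (j - 1) (by omega) (by omega)).1
  omega

include hr hq hm hT in
lemma key_rows (j : ℕ) (hjr : j ≤ r - 1) :
    ∀ i, 1 ≤ i → i ≤ q * r + 1 → (T i (j + 1) ≤ j * q + 1 ↔ i ≤ r - j) := by
  have hrq : r ≤ q * r := by
    calc r = 1 * r := (one_mul r).symm
    _ ≤ q * r := Nat.mul_le_mul_right r hq
  have hsum : ∑ j' ∈ Finset.Icc 1 r, ccnt (q * r + 1) T j' (j * q + 1) =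
      r * (j * q + 1) := by
    rw [← gridLe r q m T hT (j * q + 1) (by
      have : j * q ≤ r * q := Nat.mul_le_mul_right q (by omega)
      have : r * q = q * r := mul_comm r q
      omega)]
    rw [cardProd (q * r + 1) r (fun a b => T a b ≤ j * q + 1)]
    rfl
  have hclass := sum_classify r j (q * r + 1) (ccnt (q * r + 1) T (j + 1) (j * q + 1)) 0
    (fun j' => ccnt (q * r + 1) T j' (j * q + 1)) (by omega)
    (fun j' h1 h2 => ccnt_full r q m T hT j' (j * q + 1) h1 (by omega) (by
      have : j' * q ≤ j * q := Nat.mul_le_mul_right q h2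
      omega))
    (fun _ => rfl)
    (fun h => ccnt_zero r q m T hm hT (j + 2) (j * q + 1) (by omega) h (by norm_num))
    (fun j' h1 h2 => ccnt_zero r q m T hm hT j' (j * q + 1) (by omega) h2 (by
      have : j * q ≤ (j' - 2) * q := Nat.mul_le_mul_right q (by omega)
      omega))
  rw [hsum] at hclass
  have hif1 : (if j + 1 ≤ r then ccnt (q * r + 1) T (j + 1) (j * q + 1) else 0) =
      ccnt (q * r + 1) T (j + 1) (j * q + 1) := if_pos (by omega)
  have hif2 : (if j + 2 ≤ r then (0 : ℕ) else 0) = 0 := by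
    by_cases h : j + 2 ≤ r
    · rw [if_pos h]
    · rw [if_neg h]
  rw [hif1, hif2] at hclass
  have ha : r * (j * q + 1) = j * q * r + r := by ring
  have hb : j * (q * r + 1) = j * q * r + j := by ring
  have hcc : ccnt (q * r + 1) T (j + 1) (j * q + 1) = r - j := by omega
  exact downClosed_char (fun i => T i (j + 1) ≤ j * q + 1)
    (fun i i' h1 h2 h3 hP =>
      le_trans (colMono r q m T hT i i' (j + 1) h1 h2 h3 (by omega) (by omega)) hP)
    hcc

include hr hq hm hT in
lemma PsiF_SeqCond (j : ℕ) (hj : 1 ≤ j) (hjr : j ≤ r - 1) :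
    SeqCond r q m j (PsiF r q T j) := by
  have hkey := key_rows r q m T hr hq hm hT j hjr
  have hrq : r ≤ q * r := by
    calc r = 1 * r := (one_mul r).symm
    _ ≤ q * r := Nat.mul_le_mul_right r hq
  have hval : ∀ i, 1 ≤ i → i ≤ r - j →
      (j - 1) * q + m j + 1 ≤ T i (j + 1) ∧ T i (j + 1) ≤ j * q + 1 := by
    intro i hi1 hi2
    constructor
    · have := colLow r q m T hT i (j + 1) hi1 (by omega) (by omega) (by omega)
      have he : j + 1 - 2 = j - 1 := by omega
      have he2 : j + 1 - 1 = j := by omega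
      rw [he, he2] at this
      exact this
    · exact (hkey i hi1 (by omega)).mpr hi2
  refine ⟨?_, ?_, ?_⟩
  · intro i hi1 hi2
    have hv := hval i hi1 hi2
    rw [PsiF, if_pos ⟨hj, hjr, hi1, hi2⟩]
    have : (j - 1) * q ≤ j * q := Nat.mul_le_mul_right q (by omega)
    have : j * q = (j - 1) * q + q := by
      have hj' : j = (j - 1) + 1 := by omega
      nth_rewrite 1 [hj']
      ring
    omega
  · intro i hi1 hi2
    rw [PsiF, PsiF, if_pos ⟨hj, hjr, hi1, by omega⟩, if_pos ⟨hj, hjr, by omega, by omega⟩]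
    have h1 := colMono r q m T hT i (i + 1) (j + 1) hi1 (by omega) (by omega)
      (by omega) (by omega)
    exact Nat.sub_le_sub_right h1 _
  · intro i hi
    rw [PsiF, if_neg (by omega)]


include hr hq hm hT in
lemma PsiF_hFb : ∀ j i, 1 ≤ j → j ≤ r - 1 → 1 ≤ i → i ≤ r - j →
    2 ≤ PsiF r q T j i ∧ PsiF r q T j i ≤ q + 1 := by
  intro j i hj hjr hi1 hi2
  have hs := (PsiF_SeqCond r q m T hr hq hm hT j hj hjr).1 i hi1 hi2
  have := (hm j hj hjr).1
  omega

include hr hq hm hT in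
lemma ccnt_Ecol (j v : ℕ) (hj : 1 ≤ j) (hjr : j ≤ r) :
    ccnt (q * r + 1) T j v = Ecol r q (PsiF r q T) j v := by
  have hrq : r ≤ q * r := by
    calc r = 1 * r := (one_mul r).symm
    _ ≤ q * r := Nat.mul_le_mul_right r hq
  have hFbT := PsiF_hFb r q m T hr hq hm hT
  have hjq : j * q = (j - 1) * q + q := by
    have hj' : j = (j - 1) + 1 := by omega
    nth_rewrite 1 [hj']
    ring
  by_cases hc1 : j * q + 1 ≤ v
  · rw [Ecol, if_pos hc1]
    exact ccnt_full r q m T hT j v hj hjr hc1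
  · by_cases hc2 : (j - 1) * q + 1 ≤ v
    · -- middle band
      rw [Ecol, if_neg hc1, if_pos hc2]
      set t := v - (j - 1) * q with htdef
      have ht1 : 1 ≤ t := by omega
      have htq : t ≤ q := by omega
      have hvv : v ≤ q * r := by
        have : (j - 1) * q ≤ (r - 1) * q := Nat.mul_le_mul_right q (by omega)
        have : (r - 1) * q + q = r * q := by
          have hr' : r = (r - 1) + 1 := by omega
          nth_rewrite 2 [hr']
          ring
        have : r * q = q * r := mul_comm r q
        omega
      have hcnt : (if j + 1 ≤ r then ccnt (q * r + 1) T (j + 1) v else 0)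
          = cnt r (PsiF r q T) j t := by
        by_cases hjr1 : j + 1 ≤ r
        · rw [if_pos hjr1, ccnt, cnt, if_neg (by omega)]
          apply congrArg Finset.card
          ext i
          simp only [Finset.mem_filter, Finset.mem_Icc]
          have hkey := key_rows r q m T hr hq hm hT j (by omega)
          constructor
          · rintro ⟨⟨hi1, hin⟩, hTv⟩
            have hir : i ≤ r - j := (hkey i hi1 hin).mp (by omega)
            have hlow := colLow r q m T hT i (j + 1) hi1 hin (by omega) (by omega)
            have e1 : j + 1 - 2 = j - 1 := by omega
            have e2 : j + 1 - 1 = j := by omega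
            rw [e1, e2] at hlow
            rw [PsiF, if_pos ⟨hj, by omega, hi1, hir⟩]
            exact ⟨⟨hi1, hir⟩, by omega⟩
          · rintro ⟨⟨hi1, hir⟩, hPsi⟩
            have hin : i ≤ q * r + 1 := by omega
            have hlow := colLow r q m T hT i (j + 1) hi1 hin (by omega) (by omega)
            have e1 : j + 1 - 2 = j - 1 := by omega
            have e2 : j + 1 - 1 = j := by omega
            rw [e1, e2] at hlow
            rw [PsiF, if_pos ⟨hj, by omega, hi1, hir⟩] at hPsi
            refine ⟨⟨hi1, hin⟩, ?_⟩
            have := (hm j hj (by omega)).1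
            omega
        · rw [if_neg hjr1, cnt, if_neg (by omega)]
          have hrj : r - j = 0 := by omega
          rw [hrj]
          simp
      have hsum : ∑ j' ∈ Finset.Icc 1 r, ccnt (q * r + 1) T j' v = r * v := by
        rw [← gridLe r q m T hT v (by omega)]
        rw [cardProd (q * r + 1) r (fun a b => T a b ≤ v)]
        rfl
      have hclass := sum_classify r (j - 1) (q * r + 1) (ccnt (q * r + 1) T j v)
        (ccnt (q * r + 1) T (j + 1) v)
        (fun j' => ccnt (q * r + 1) T j' v) (by omega)
        (fun j' h1 h2 => ccnt_full r q m T hT j' v h1 (by omega) (by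
          have : j' * q ≤ (j - 1) * q := Nat.mul_le_mul_right q h2
          omega))
        (fun _ => by
          have he : j - 1 + 1 = j := by omega
          rw [he])
        (fun _ => by
          have he : j - 1 + 2 = j + 1 := by omega
          rw [he])
        (fun j' h1 h2 => ccnt_zero r q m T hm hT j' v (by omega) h2 (by
          have : j * q ≤ (j' - 2) * q := Nat.mul_le_mul_right q (by omega)
          omega))
      rw [hsum] at hclass
      have hifa : (if j - 1 + 1 ≤ r then ccnt (q * r + 1) T j v else 0)
          = ccnt (q * r + 1) T j v := if_pos (by omega)
      have hifb : (if j - 1 + 2 ≤ r then ccnt (q * r + 1) T (j + 1) v else 0)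
          = (if j + 1 ≤ r then ccnt (q * r + 1) T (j + 1) v else 0) := by
        by_cases h : j + 1 ≤ r
        · rw [if_pos (by omega), if_pos h]
        · rw [if_neg (by omega), if_neg h]
      rw [hifa, hifb, hcnt] at hclass
      have hcle : cnt r (PsiF r q T) j t ≤ r - j := c_le r (PsiF r q T) j t hj
      have hgoal : (j - 1) * (q * r + 1) = (j - 1) * q * r + (j - 1) := by ring
      by_cases ht2 : t = 1
      · have hc0 : cnt r (PsiF r q T) j t = 0 := by
          rw [ht2]
          exact c_small r q (PsiF r q T) hFbT j 1 hj (le_refl 1)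
        have hNN0 : NN r (PsiF r q T) j t = 0 := by
          rw [NN, hc0, ht2]; simp
        have hrv : r * v = (j - 1) * q * r + r := by
          have hveq : v = (j - 1) * q + 1 := by omega
          rw [hveq]; ring
        rw [hNN0]
        omega
      · obtain ⟨u, hu⟩ : ∃ u, t = u + 1 := ⟨t - 1, by omega⟩
        have hu1 : 1 ≤ u := by omega
        have hNNu : NN r (PsiF r q T) j t = u * r - cnt r (PsiF r q T) j t := by
          rw [NN, hu]; simp
        have hrv : r * v = (j - 1) * q * r + u * r + r := by
          have hveq : v = (j - 1) * q + (u + 1) := by omega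
          rw [hveq]; ring
        have hur : r ≤ u * r := by
          calc r = 1 * r := (one_mul r).symm
          _ ≤ u * r := Nat.mul_le_mul_right r hu1
        rw [hNNu]
        omega
    · -- below the band
      rw [Ecol, if_neg hc1, if_neg hc2]
      by_cases hj1 : j = 1
      · subst hj1
        have hv0 : v = 0 := by omega
        subst hv0
        have hL : ccnt (q * r + 1) T 1 0 = 0 := by
          rw [ccnt, Finset.card_eq_zero, Finset.filter_eq_empty_iff]
          intro i hi
          simp only [Finset.mem_Icc] at hi
          have := (hT.1 i 1 hi.1 hi.2 (le_refl 1) hr).1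
          omega
        rw [hL, cnt]
        simp
      · have hkey := key_rows r q m T hr hq hm hT (j - 1) (by omega)
        have he0 : j - 1 + 1 = j := by omega
        rw [he0] at hkey
        rw [ccnt, cnt, if_neg (by omega)]
        apply congrArg Finset.card
        ext i
        simp only [Finset.mem_filter, Finset.mem_Icc]
        constructor
        · rintro ⟨⟨hi1, hin⟩, hTv⟩
          have hir : i ≤ r - (j - 1) := (hkey i hi1 hin).mp (by omega)
          have hlow := colLow r q m T hT i j hi1 hin (by omega) hjr
          rw [PsiF, if_pos ⟨by omega, by omega, hi1, hir⟩, he0]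
          have e2 : j - 1 - 1 = j - 2 := by omega
          rw [e2]
          exact ⟨⟨hi1, hir⟩, by omega⟩
        · rintro ⟨⟨hi1, hir⟩, hPsi⟩
          have hin : i ≤ q * r + 1 := by omega
          have hlow := colLow r q m T hT i j hi1 hin (by omega) hjr
          rw [PsiF, if_pos ⟨by omega, by omega, hi1, hir⟩, he0] at hPsi
          have e2 : j - 1 - 1 = j - 2 := by omega
          rw [e2] at hPsi
          refine ⟨⟨hi1, hin⟩, ?_⟩
          have := (hm (j - 1) (by omega) (by omega)).1
          omega

include hr hq hm hT in
lemma Phi_PsiF_eq : Phi r q (PsiF r q T) = T := by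
  have hFbT := PsiF_hFb r q m T hr hq hm hT
  have hPhiTab : TabCond r q (q * r + 1) m (Phi r q (PsiF r q T)) :=
    Phi_TabCond r q (PsiF r q T) hFbT hr hq
      (fun j i h1 h2 h3 h4 => (PsiF_SeqCond r q m T hr hq hm hT j h1 h2).1 i h3 h4 |>.1)
      (fun j i h1 h2 h3 h4 => (PsiF_SeqCond r q m T hr hq hm hT j h1 h2).2.1 i h3 h4)
  funext i j
  by_cases hgrid : 1 ≤ i ∧ i ≤ q * r + 1 ∧ 1 ≤ j ∧ j ≤ r
  · refine mono_determined (n := q * r + 1) (fun i' => Phi r q (PsiF r q T) i' j)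
      (fun i' => T i' j) ?_ ?_ ?_ i hgrid.1 hgrid.2.1
    · intro a b h1 h2 h3
      exact colMono r q m (Phi r q (PsiF r q T)) hPhiTab a b j h1 h2 h3
        hgrid.2.2.1 hgrid.2.2.2
    · intro a b h1 h2 h3
      exact colMono r q m T hT a b j h1 h2 h3 hgrid.2.2.1 hgrid.2.2.2
    · intro v
      have h1 := Phi_ccnt r q (PsiF r q T) hFbT hq j v hgrid.2.2.1 hgrid.2.2.2
      have h2 := ccnt_Ecol r q m T hr hq hm hT j v hgrid.2.2.1 hgrid.2.2.2
      rw [ccnt] at h2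
      rw [h1, ← h2]
  · rw [Phi_zero r q (PsiF r q T) i j (by omega), hT.2.2.2.2.2.2 i j (by omega)]

end rigid

end core




section counting

lemma strictMono_gap {k : ℕ} (g : Fin k → ℕ) (hg : StrictMono g) :
    ∀ (d : ℕ) (x y : Fin k), x.val + d = y.val → g x + d ≤ g y := by
  intro d
  induction d with
  | zero =>
      intro x y h
      have : x = y := Fin.ext (by omega)
      subst this
      simp
  | succ d ih =>
      intro x y h
      have hz : x.val + d < k := by
        have := y.isLt
        omega
      have h1 := ih x ⟨x.val + d, hz⟩ rfl
      have h2 : g ⟨x.val + d, hz⟩ < g y := by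
        apply hg
        rw [Fin.lt_def]
        simp only
        omega
      omega

lemma seq_mono_of (r q : ℕ) (m : ℕ → ℕ) (j : ℕ) (f : ℕ → ℕ)
    (hf : SeqCond r q m j f) :
    ∀ i i', 1 ≤ i → i ≤ i' → i' ≤ r - j → f i ≤ f i' := by
  intro i i' hi hii hi'
  induction i', hii using Nat.le_induction with
  | base => exact le_refl _
  | succ i' hii ih =>
      exact le_trans (ih (by omega)) (hf.2.1 i' (by omega) (by omega))

/-- the sequence read back from a finset of cardinality `k`. -/
def rdSeq (k : ℕ) (s : Finset ℕ) (h : s.card = k) : ℕ → ℕ := fun i =>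
  if hh : 1 ≤ i ∧ i ≤ k then (s.orderEmbOfFin h ⟨i - 1, by omega⟩ : ℕ) - i else 0

lemma rdSeq_pos (k : ℕ) (s : Finset ℕ) (h : s.card = k) (i : ℕ)
    (hi1 : 1 ≤ i) (hi2 : i ≤ k) (p : i - 1 < k) :
    rdSeq k s h i = (s.orderEmbOfFin h ⟨i - 1, p⟩ : ℕ) - i := by
  rw [rdSeq, dif_pos ⟨hi1, hi2⟩]

lemma rdSeq_neg (k : ℕ) (s : Finset ℕ) (h : s.card = k) (i : ℕ)
    (hi : ¬(1 ≤ i ∧ i ≤ k)) : rdSeq k s h i = 0 := by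
  rw [rdSeq, dif_neg hi]

lemma emb_bounds (k a b : ℕ) (s : Finset ℕ) (hsub : s ⊆ Finset.Icc a b)
    (h : s.card = k) (x : Fin k) :
    a + x.val ≤ s.orderEmbOfFin h x ∧
      (s.orderEmbOfFin h x : ℕ) + (k - 1 - x.val) ≤ b := by
  have hmem : ∀ y : Fin k, s.orderEmbOfFin h y ∈ Finset.Icc a b :=
    fun y => hsub (Finset.orderEmbOfFin_mem s h y)
  have hk0 : 0 < k := by have := x.isLt; omega
  have hlow := strictMono_gap (fun y => (s.orderEmbOfFin h y : ℕ))
    (fun y y' hy => (s.orderEmbOfFin h).strictMono hy)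
    x.val ⟨0, hk0⟩ x (by simp)
  have hhigh := strictMono_gap (fun y => (s.orderEmbOfFin h y : ℕ))
    (fun y y' hy => (s.orderEmbOfFin h).strictMono hy)
    (k - 1 - x.val) x ⟨k - 1, by omega⟩ (by simp; omega)
  have hm0 := hmem ⟨0, hk0⟩
  have hmk := hmem ⟨k - 1, by omega⟩
  rw [Finset.mem_Icc] at hm0 hmk
  constructor
  · omega
  · omega

lemma seq_card (r q : ℕ) (m : ℕ → ℕ) (j : ℕ) (hj : 1 ≤ j) (hjr : j ≤ r - 1)
    (hmj : 1 ≤ m j ∧ m j ≤ q) :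
    Nat.card {f : ℕ → ℕ // SeqCond r q m j f}
      = (q - m j + (r - j)).choose (r - j) := by
  set k := r - j with hk
  set a := m j with ha
  set S := Finset.powersetCard k (Finset.Icc (a + 2) (q + 1 + k)) with hS
  have hmemS : ∀ (f : ℕ → ℕ), SeqCond r q m j f →
      (Finset.Icc 1 k).image (fun i => f i + i) ∈ S := by
    intro f hf
    rw [hS, Finset.mem_powersetCard]
    constructor
    · intro x hx
      rw [Finset.mem_image] at hx
      obtain ⟨i, hi, hix⟩ := hx
      simp only [Finset.mem_Icc] at hi
      have hb := hf.1 i hi.1 hi.2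
      rw [Finset.mem_Icc]
      omega
    · rw [Finset.card_image_of_injOn, Nat.card_Icc]
      · omega
      · have hstr : ∀ x y, x ∈ Finset.Icc 1 k → y ∈ Finset.Icc 1 k → x < y →
            f x + x < f y + y := by
          intro x y hx hy hxy
          simp only [Finset.mem_Icc] at hx hy
          have := seq_mono_of r q m j f hf x y hx.1 (by omega) hy.2
          omega
        intro x hx y hy hxy
        have hxy' : f x + x = f y + y := hxy
        by_contra hne
        rcases Nat.lt_or_ge x y with h | h
        · have := hstr x y hx hy h; omega
        · have := hstr y x hy hx (by omega); omega
  have hrdCond : ∀ (s : Finset ℕ) (hs : s ∈ S),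
      SeqCond r q m j (rdSeq k s (Finset.mem_powersetCard.mp hs).2) := by
    intro s hs
    obtain ⟨hsub, hcard⟩ := Finset.mem_powersetCard.mp hs
    have hcard' : (Finset.mem_powersetCard.mp hs).2 = hcard := rfl
    refine ⟨?_, ?_, ?_⟩
    · intro i hi1 hi2
      have p : i - 1 < k := by omega
      rw [rdSeq_pos k s _ i hi1 (by omega) p]
      have hb := emb_bounds k (a + 2) (q + 1 + k) s hsub
        (Finset.mem_powersetCard.mp hs).2 ⟨i - 1, p⟩
      simp only at hb
      omega
    · intro i hi1 hi2
      have p1 : i - 1 < k := by omega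
      have p2 : i + 1 - 1 < k := by omega
      rw [rdSeq_pos k s _ i hi1 (by omega) p1,
        rdSeq_pos k s _ (i + 1) (by omega) (by omega) p2]
      have hgap := strictMono_gap
        (fun y => (s.orderEmbOfFin (Finset.mem_powersetCard.mp hs).2 y : ℕ))
        (fun y y' hy => (s.orderEmbOfFin _).strictMono hy)
        1 ⟨i - 1, p1⟩ ⟨i + 1 - 1, p2⟩ (by simp; omega)
      omega
    · intro i hi
      exact rdSeq_neg k s _ i (by omega)
  have e : {f : ℕ → ℕ // SeqCond r q m j f} ≃ {s : Finset ℕ // s ∈ S} := by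
    refine ⟨fun f => ⟨(Finset.Icc 1 k).image (fun i => f.1 i + i), hmemS f.1 f.2⟩,
      fun s => ⟨rdSeq k s.1 (Finset.mem_powersetCard.mp s.2).2, hrdCond s.1 s.2⟩,
      ?_, ?_⟩
    · -- left inverse
      rintro ⟨f, hf⟩
      apply Subtype.ext
      simp only
      funext i
      by_cases hi : 1 ≤ i ∧ i ≤ k
      · have hmem := hmemS f hf
        have hcard := (Finset.mem_powersetCard.mp hmem).2
        have p : i - 1 < k := by omega
        rw [rdSeq_pos k _ _ i hi.1 hi.2 p]
        have hE : (fun (x : Fin k) => f (x.val + 1) + (x.val + 1)) =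
            ((Finset.Icc 1 k).image (fun i => f i + i)).orderEmbOfFin
              (Finset.mem_powersetCard.mp hmem).2 := by
          apply Finset.orderEmbOfFin_unique
          · intro x
            rw [Finset.mem_image]
            exact ⟨x.val + 1, by rw [Finset.mem_Icc]; have := x.isLt; omega, rfl⟩
          · intro x y hxy
            rw [Fin.lt_def] at hxy
            show f (x.val + 1) + (x.val + 1) < f (y.val + 1) + (y.val + 1)
            have hmono := seq_mono_of r q m j f hf (x.val + 1) (y.val + 1)
              (by omega) (by omega) (by have := y.isLt; omega)
            omega
        have hval := congrFun hE ⟨i - 1, p⟩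
        simp only at hval
        rw [← hval]
        have hii : i - 1 + 1 = i := by omega
        rw [hii]
        omega
      · rw [rdSeq_neg k _ _ i hi]
        exact (hf.2.2 i (by omega)).symm
    · -- right inverse
      rintro ⟨s, hs⟩
      apply Subtype.ext
      simp only
      obtain ⟨hsub, hcard⟩ := Finset.mem_powersetCard.mp hs
      ext x
      rw [Finset.mem_image]
      constructor
      · rintro ⟨i, hi, hix⟩
        rw [Finset.mem_Icc] at hi
        have p : i - 1 < k := by omega
        rw [rdSeq_pos k s _ i hi.1 hi.2 p] at hix
        have hb := emb_bounds k (a + 2) (q + 1 + k) s hsub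
          (Finset.mem_powersetCard.mp hs).2 ⟨i - 1, p⟩
        simp only at hb
        have hx : x = (s.orderEmbOfFin (Finset.mem_powersetCard.mp hs).2
            ⟨i - 1, p⟩ : ℕ) := by omega
        rw [hx]
        exact Finset.orderEmbOfFin_mem s _ _
      · intro hx
        have hrange : x ∈ Set.range (s.orderEmbOfFin
            (Finset.mem_powersetCard.mp hs).2) := by
          rw [Finset.range_orderEmbOfFin]
          exact hx
        obtain ⟨y, hy⟩ := hrange
        have hyk := y.isLt
        refine ⟨y.val + 1, by rw [Finset.mem_Icc]; omega, ?_⟩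
        have p : y.val + 1 - 1 < k := by omega
        rw [rdSeq_pos k s _ (y.val + 1) (by omega) (by omega) p]
        have hyy : (⟨y.val + 1 - 1, p⟩ : Fin k) = y := Fin.ext (by simp)
        rw [hyy, hy]
        have hb := emb_bounds k (a + 2) (q + 1 + k) s hsub
          (Finset.mem_powersetCard.mp hs).2 y
        rw [hy] at hb
        omega
  rw [Nat.card_congr e]
  have h1 : Nat.card {s : Finset ℕ // s ∈ S} = S.card := by
    rw [Nat.card_eq_fintype_card]
    exact Fintype.card_coe S
  rw [h1, hS, Finset.card_powersetCard, Nat.card_Icc]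
  congr 1
  omega

end counting

/-- assemble a family of sequences indexed by `Fin (r-1)` into a single function. -/
def famOf (r q : ℕ) (m : ℕ → ℕ)
    (G : ∀ j : Fin (r - 1), {f : ℕ → ℕ // SeqCond r q m (j.val + 1) f}) :
    ℕ → ℕ → ℕ :=
  fun j' => if h : 1 ≤ j' ∧ j' ≤ r - 1 then (G ⟨j' - 1, by omega⟩).1 else fun _ => 0

lemma famOf_pos (r q : ℕ) (m : ℕ → ℕ)
    (G : ∀ j : Fin (r - 1), {f : ℕ → ℕ // SeqCond r q m (j.val + 1) f})
    (j' : ℕ) (h : 1 ≤ j' ∧ j' ≤ r - 1) (p : j' - 1 < r - 1) :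
    famOf r q m G j' = (G ⟨j' - 1, p⟩).1 := dif_pos h

lemma famOf_neg (r q : ℕ) (m : ℕ → ℕ)
    (G : ∀ j : Fin (r - 1), {f : ℕ → ℕ // SeqCond r q m (j.val + 1) f})
    (j' : ℕ) (h : ¬(1 ≤ j' ∧ j' ≤ r - 1)) :
    famOf r q m G j' = fun _ => 0 := dif_neg h

lemma famOf_SeqCond (r q : ℕ) (m : ℕ → ℕ)
    (G : ∀ j : Fin (r - 1), {f : ℕ → ℕ // SeqCond r q m (j.val + 1) f})
    (j' : ℕ) (h1 : 1 ≤ j') (h2 : j' ≤ r - 1) :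
    SeqCond r q m j' (famOf r q m G j') := by
  have p : j' - 1 < r - 1 := by omega
  rw [famOf_pos r q m G j' ⟨h1, h2⟩ p]
  have hc := (G ⟨j' - 1, p⟩).2
  convert hc using 2
  simp only [Fin.val_mk]
  omega

end TabAux



/-- Lemma 3.7 of the paper: there is a bijection between
`A_1 × A_2 × ⋯ × A_{r-1}` and the set `𝒜` of balanced standard tableaux of shape
`n × r` supported on `X^{v_m}_{w_{r,n}}`; in particular
`|𝒜| = ∏_{j=1}^{r-1} C(q - m_j + r - j, r - j)`. -/
theorem tableaux_bijection_and_card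
    (r q : ℕ) (hr : 0 < r) (hq : 0 < q) (n : ℕ) (hn : n = q * r + 1)
    (m : ℕ → ℕ) (hm : ∀ i : ℕ, 1 ≤ i → i ≤ r - 1 → 1 ≤ m i ∧ m i ≤ q) :
    Nonempty ((∀ j : Fin (r - 1), {f : ℕ → ℕ // SeqCond r q m (j.val + 1) f}) ≃
        {T : ℕ → ℕ → ℕ // TabCond r q n m T}) ∧
      Nat.card {T : ℕ → ℕ → ℕ // TabCond r q n m T} =
        ∏ j : Fin (r - 1),
          Nat.choose (q - m (j.val + 1) + (r - (j.val + 1))) (r - (j.val + 1)) := by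
  subst hn
  have hrq : r ≤ q * r := by
    calc r = 1 * r := (one_mul r).symm
    _ ≤ q * r := Nat.mul_le_mul_right r hq
  -- the equivalence
  have E : (∀ j : Fin (r - 1), {f : ℕ → ℕ // SeqCond r q m (j.val + 1) f}) ≃
      {T : ℕ → ℕ → ℕ // TabCond r q (q * r + 1) m T} := by
    have hFbG : ∀ (G : ∀ j : Fin (r - 1), {f : ℕ → ℕ // SeqCond r q m (j.val + 1) f}),
        ∀ j i, 1 ≤ j → j ≤ r - 1 → 1 ≤ i → i ≤ r - j →
          2 ≤ TabAux.famOf r q m G j i ∧ TabAux.famOf r q m G j i ≤ q + 1 := by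
      intro G j i h1 h2 h3 h4
      have hc := (TabAux.famOf_SeqCond r q m G j h1 h2).1 i h3 h4
      have := (hm j h1 h2).1
      omega
    refine ⟨fun G => ⟨TabAux.Phi r q (TabAux.famOf r q m G),
      TabAux.Phi_TabCond r q (TabAux.famOf r q m G) (hFbG G) hr hq
        (fun j i h1 h2 h3 h4 => (TabAux.famOf_SeqCond r q m G j h1 h2).1 i h3 h4 |>.1)
        (fun j i h1 h2 h3 h4 => (TabAux.famOf_SeqCond r q m G j h1 h2).2.1 i h3 h4)⟩,
      fun T => fun j => ⟨TabAux.PsiF r q T.1 (j.val + 1),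
        TabAux.PsiF_SeqCond r q m T.1 hr hq hm T.2 (j.val + 1) (by omega)
          (by have := j.isLt; omega)⟩, ?_, ?_⟩
    · -- left inverse
      intro G
      funext j
      apply Subtype.ext
      simp only
      funext i
      have hj1 : 1 ≤ j.val + 1 := by omega
      have hjr : j.val + 1 ≤ r - 1 := by have := j.isLt; omega
      by_cases hi : 1 ≤ i ∧ i ≤ r - (j.val + 1)
      · rw [TabAux.PsiF, if_pos ⟨hj1, hjr, hi.1, hi.2⟩]
        have hPhi : TabAux.Phi r q (TabAux.famOf r q m G) i (j.val + 1 + 1) =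
            (j.val + 1 - 1) * q + (G j).1 i := by
          rw [TabAux.Phi, if_pos (by omega), if_pos (by omega), if_neg (by omega)]
          have e1 : j.val + 1 + 1 - 2 = j.val + 1 - 1 := by omega
          have e2 : j.val + 1 + 1 - 1 = j.val + 1 := by omega
          rw [e1, e2]
          have p : j.val + 1 - 1 < r - 1 := by omega
          rw [TabAux.famOf_pos r q m G (j.val + 1) ⟨hj1, hjr⟩ p]
          have hjj : (⟨j.val + 1 - 1, p⟩ : Fin (r - 1)) = j := Fin.ext (by simp)
          rw [hjj]
        rw [hPhi]
        omega
      · rw [TabAux.PsiF, if_neg (by omega)]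
        exact ((G j).2.2.2 i (by omega)).symm
    · -- right inverse
      intro T
      apply Subtype.ext
      simp only
      have hfam : TabAux.famOf r q m (fun j => ⟨TabAux.PsiF r q T.1 (j.val + 1),
          TabAux.PsiF_SeqCond r q m T.1 hr hq hm T.2 (j.val + 1) (by omega)
            (by have := j.isLt; omega)⟩) = TabAux.PsiF r q T.1 := by
        funext j' i
        by_cases h : 1 ≤ j' ∧ j' ≤ r - 1
        · have p : j' - 1 < r - 1 := by omega
          rw [TabAux.famOf_pos r q m _ j' h p]
          show TabAux.PsiF r q T.1 ((⟨j' - 1, p⟩ : Fin (r - 1)).val + 1) i =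
            TabAux.PsiF r q T.1 j' i
          have he : (⟨j' - 1, p⟩ : Fin (r - 1)).val + 1 = j' := by
            simp only [Fin.val_mk]; omega
          rw [he]
        · rw [TabAux.famOf_neg r q m _ j' h]
          rw [TabAux.PsiF, if_neg (by omega)]
      rw [hfam]
      exact TabAux.Phi_PsiF_eq r q m T.1 hr hq hm T.2
  refine ⟨⟨E⟩, ?_⟩
  rw [Nat.card_congr E.symm, Nat.card_pi]
  apply Finset.prod_congr rfl
  intro j _
  exact TabAux.seq_card r q m (j.val + 1) (by omega) (by have := j.isLt; omega)
    (hm (j.val + 1) (by omega) (by have := j.isLt; omega))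
end
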